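/- arXiv:1508.04914 — 8 statements merged into one kernel-verified Lean document; each statement's English description precedes it below -/
import Mathlib

section
/- Let H be a real Hilbert space, Q a nonempty closed convex subset of H, and g : Q × Q → ℝ a monotone bifunction on Q. Fix α > 0 and u, v ∈ H, and suppose w_u, w_v ∈ Q satisfy g(w_u, y) + (1/α)⟨y − w_u, w_u − u⟩ ≥ 0 for all y ∈ Q and g(w_v, y) + (1/α)⟨y − w_v, w_v − v⟩ ≥ 0 for all y ∈ Q. Then ‖w_u − w_v‖² ≤ ⟨w_u − w_v, u − v⟩; that is, the resolvent T_α^g is firmly nonexpansive. -/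
open scoped InnerProductSpace

section

variable {H : Type*} [NormedAddCommGroup H] [InnerProductSpace ℝ H]

/-- `w` is the resolvent point `T_α^g(u)` of the bifunction `g` on `Q`. -/
def IsResolventPoint (g : H → H → ℝ) (Q : Set H) (α : ℝ) (u w : H) : Prop :=
  w ∈ Q ∧ ∀ y ∈ Q, g w y + (1 / α) * ⟪y - w, w - u⟫_ℝ ≥ 0

variable {g : H → H → ℝ} {Q : Set H} {α : ℝ}

theorem IsResolventPoint.inner_le_mul_apply {u w y : H} (hw : IsResolventPoint g Q α u w)
    (hα : 0 < α) (hy : y ∈ Q) : ⟪w - y, w - u⟫_ℝ ≤ α * g w y := by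
  have hres := hw.2 y hy
  rw [← neg_sub y w, inner_neg_left]
  field_simp at hres
  linarith

theorem IsResolventPoint.norm_sub_sq_le_inner {u v wu wv : H}
    (hmono : ∀ x ∈ Q, ∀ y ∈ Q, g x y + g y x ≤ 0) (hα : 0 < α)
    (hu : IsResolventPoint g Q α u wu) (hv : IsResolventPoint g Q α v wv) :
    ‖wu - wv‖ ^ 2 ≤ ⟪wu - wv, u - v⟫_ℝ := by
  have hgap : ⟪wu - wv, (wu - wv) - (u - v)⟫_ℝ ≤ 0 := calc
    _ = ⟪wu - wv, wu - u⟫_ℝ + ⟪wv - wu, wv - v⟫_ℝ := by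
      rw [show (wu - wv) - (u - v) = (wu - u) - (wv - v) by abel, inner_sub_right,
        ← neg_sub wu wv, inner_neg_left]
      ring
    _ ≤ α * g wu wv + α * g wv wu :=
      add_le_add (hu.inner_le_mul_apply hα hv.1) (hv.inner_le_mul_apply hα hu.1)
    _ = α * (g wu wv + g wv wu) := by ring
    _ ≤ 0 := mul_nonpos_of_nonneg_of_nonpos hα.le (hmono wu hu.1 wv hv.1)
  rw [inner_sub_right, real_inner_self_eq_norm_sq] at hgap
  linarith

end

theorem resolvent_firmly_nonexpansive_general
    {H : Type*} [NormedAddCommGroup H] [InnerProductSpace ℝ H]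
    (Q : Set H)
    (g : H → H → ℝ)
    (hmono : ∀ u ∈ Q, ∀ v ∈ Q, g u v + g v u ≤ 0)
    (α : ℝ) (hα : 0 < α) (u v : H)
    (wu wv : H) (hwuQ : wu ∈ Q) (hwvQ : wv ∈ Q)
    (hwu : ∀ y ∈ Q, g wu y + (1 / α) * (inner ℝ (y - wu) (wu - u) : ℝ) ≥ 0)
    (hwv : ∀ y ∈ Q, g wv y + (1 / α) * (inner ℝ (y - wv) (wv - v) : ℝ) ≥ 0) :
    ‖wu - wv‖ ^ 2 ≤ (inner ℝ (wu - wv) (u - v) : ℝ) :=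
  IsResolventPoint.norm_sub_sq_le_inner hmono hα ⟨hwuQ, hwu⟩ ⟨hwvQ, hwv⟩

/-- The resolvent of a monotone bifunction is firmly nonexpansive:
`‖w_u − w_v‖² ≤ ⟨w_u − w_v, u − v⟩`. -/
theorem resolvent_firmly_nonexpansive
    {H : Type*} [NormedAddCommGroup H] [InnerProductSpace ℝ H] [CompleteSpace H]
    (Q : Set H) (hQne : Q.Nonempty) (hQcl : IsClosed Q) (hQcv : Convex ℝ Q)
    (g : H → H → ℝ)
    (hmono : ∀ u ∈ Q, ∀ v ∈ Q, g u v + g v u ≤ 0)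
    (α : ℝ) (hα : 0 < α) (u v : H)
    (wu wv : H) (hwuQ : wu ∈ Q) (hwvQ : wv ∈ Q)
    (hwu : ∀ y ∈ Q, g wu y + (1 / α) * (inner ℝ (y - wu) (wu - u) : ℝ) ≥ 0)
    (hwv : ∀ y ∈ Q, g wv y + (1 / α) * (inner ℝ (y - wv) (wv - v) : ℝ) ≥ 0) :
    ‖wu - wv‖ ^ 2 ≤ (inner ℝ (wu - wv) (u - v) : ℝ) :=
  resolvent_firmly_nonexpansive_general Q g hmono α hα u v wu wv hwuQ hwvQ hwu hwv
end

section
/- Let H be a real Hilbert space, Q a nonempty closed convex subset of H, and g : Q × Q → ℝ a bifunction satisfying Assumptions A. Then the solution set Sol(Q, g) = {w ∈ Q : g(w, v) ≥ 0 for all v ∈ Q} is closed and convex. -/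
open Filter

/-- Under Assumptions A, the solution set `Sol(Q, g) = {w ∈ Q : g(w, v) ≥ 0 ∀ v ∈ Q}` of the
equilibrium problem is closed and convex. -/
theorem sol_closed_convex
    {H : Type*} [NormedAddCommGroup H] [InnerProductSpace ℝ H] [CompleteSpace H]
    (Q : Set H) (hQne : Q.Nonempty) (hQcl : IsClosed Q) (hQcv : Convex ℝ Q)
    (g : H → H → ℝ)
    (hA1 : ∀ u ∈ Q, g u u = 0)
    (hA2 : ∀ u ∈ Q, ∀ v ∈ Q, g u v + g v u ≤ 0)
    (hA3 : ∀ u ∈ Q, ∀ v ∈ Q, ∀ w ∈ Q,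
      limsup (fun lam : ℝ => g (lam • w + (1 - lam) • u) v) (nhdsWithin 0 (Set.Ioi 0)) ≤ g u v)
    (hA4 : ∀ u ∈ Q, ConvexOn ℝ Q (g u) ∧ LowerSemicontinuousOn (g u) Q) :
    IsClosed {w : H | w ∈ Q ∧ ∀ v ∈ Q, g w v ≥ 0} ∧
      Convex ℝ {w : H | w ∈ Q ∧ ∀ v ∈ Q, g w v ≥ 0} := by
  have hset : {w : H | w ∈ Q ∧ ∀ v ∈ Q, g w v ≥ 0}
      = {w : H | w ∈ Q ∧ ∀ v ∈ Q, g v w ≤ 0} := by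
    ext w
    constructor
    · rintro ⟨hw, hs⟩
      exact ⟨hw, fun v hv => by have h1 := hA2 w hw v hv; have h2 := hs v hv; linarith⟩
    · rintro ⟨hw, hs⟩
      refine ⟨hw, fun v hv => ?_⟩
      have key : ∀ lam : ℝ, lam ∈ Set.Ioo (0:ℝ) 1 → 0 ≤ g (lam • v + (1 - lam) • w) v := by
        intro lam hlam
        obtain ⟨hl0, hl1⟩ := hlam
        have hb : (0:ℝ) ≤ 1 - lam := by linarith
        have hab : lam + (1 - lam) = 1 := by ring
        set u := lam • v + (1 - lam) • w with hu
        have huQ : u ∈ Q := hQcv hv hw hl0.le hb hab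
        have h0 : g u u = 0 := hA1 u huQ
        have h1 : g u u ≤ lam * g u v + (1 - lam) * g u w := by
          have := (hA4 u huQ).1.2 (x := v) (y := w) hv hw hl0.le hb hab
          simpa [← hu, smul_eq_mul] using this
        have h2 : g u w ≤ 0 := hs u huQ
        nlinarith [hl0, hl1]
      have hev : ∀ᶠ lam in nhdsWithin (0:ℝ) (Set.Ioi 0),
          0 ≤ g (lam • v + (1 - lam) • w) v := by
        filter_upwards [Ioo_mem_nhdsGT_of_mem
          (by norm_num : (0:ℝ) ∈ Set.Ico (0:ℝ) 1)] with lam hlam using key lam hlam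
      have hls := hA3 w hw v hv v hv
      have hnonneg : 0 ≤ limsup (fun lam : ℝ => g (lam • v + (1 - lam) • w) v)
          (nhdsWithin 0 (Set.Ioi 0)) := by
        rw [Filter.limsup_eq]
        apply Real.sInf_nonneg
        intro a ha
        simp only [Set.mem_setOf_eq] at ha
        obtain ⟨lam, h1, h2⟩ := (Filter.Eventually.and ha hev).exists
        linarith
      linarith
  rw [hset]
  constructor
  · apply IsSeqClosed.isClosed
    intro x p hx hxp
    have hpQ : p ∈ Q := hQcl.mem_of_tendsto hxp (Filter.Eventually.of_forall fun n => (hx n).1)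
    refine ⟨hpQ, fun v hv => ?_⟩
    by_contra hlt
    push_neg at hlt
    have lsc := (hA4 v hv).2 p hpQ 0 hlt
    have htd : Tendsto x atTop (nhdsWithin p Q) :=
      tendsto_nhdsWithin_of_tendsto_nhds_of_eventually_within x hxp
        (Filter.Eventually.of_forall fun n => (hx n).1)
    obtain ⟨n, h1, h2⟩ := ((htd.eventually lsc).and
      (Filter.Eventually.of_forall fun n => (hx n).2 v hv)).exists
    linarith
  · intro x hx y hy a b ha hb hab
    refine ⟨hQcv hx.1 hy.1 ha hb hab, fun v hv => ?_⟩
    have hcv := (hA4 v hv).1.2 hx.1 hy.1 ha hb hab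
    have h1 := hx.2 v hv
    have h2 := hy.2 v hv
    simp only [smul_eq_mul] at hcv
    nlinarith
end

section
/- Let H be a real Hilbert space, C a nonempty closed convex subset of H, and f : C × C → ℝ a bifunction such that f(w, w) = 0 for all w ∈ C, f(w, ·) is convex on C for each w ∈ C, f is pseudomonotone on C, and f is Lipschitz-type continuous on C with constants c₁ > 0 and c₂ > 0. Let x* ∈ C satisfy f(x*, y) ≥ 0 for all y ∈ C, let x ∈ C, let 0 < λ < min{1/(2c₁), 1/(2c₂)}, let y* ∈ C minimize y ↦ λ f(x, y) + (1/2)‖y − x‖² over C, and let z* ∈ C minimize y ↦ λ f(y*, y) + (1/2)‖y − x‖² over C. Then ‖z* − x*‖² ≤ ‖x − x*‖² − (1 − 2λc₁)‖x − y*‖² − (1 − 2λc₂)‖y* − z*‖². -/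
open scoped InnerProductSpace

lemma two_inner_eq_aux {H : Type*} [NormedAddCommGroup H] [InnerProductSpace ℝ H]
    (a b : H) : 2 * ⟪a, b⟫_ℝ = ‖a‖ ^ 2 + ‖b‖ ^ 2 - ‖a - b‖ ^ 2 := by
  rw [@norm_sub_sq_real]; ring

/-- Variational inequality from the prox minimization step. -/
lemma prox_vi_aux {H : Type*} [NormedAddCommGroup H] [InnerProductSpace ℝ H]
    {C : Set H} (hCcv : Convex ℝ C) {g : H → ℝ} (hg : ConvexOn ℝ C g)
    {lam : ℝ} (hlam : 0 < lam) {x p : H} (hp : p ∈ C)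
    (hmin : ∀ y ∈ C, lam * g p + (1/2) * ‖p - x‖ ^ 2 ≤ lam * g y + (1/2) * ‖y - x‖ ^ 2)
    {y : H} (hy : y ∈ C) :
    ⟪x - p, y - p⟫_ℝ ≤ lam * (g y - g p) := by
  apply le_of_forall_pos_le_add
  intro ε hε
  have hnorm1 : (0:ℝ) < ‖y - p‖ ^ 2 + 1 := by positivity
  set t : ℝ := min 1 (2 * ε / (‖y - p‖ ^ 2 + 1)) with ht
  have ht0 : 0 < t := lt_min one_pos (by positivity)
  have ht1 : t ≤ 1 := min_le_left _ _
  have ht2 : t ≤ 2 * ε / (‖y - p‖ ^ 2 + 1) := min_le_right _ _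
  have hz : (1 - t) • p + t • y ∈ C := hCcv hp hy (by linarith) ht0.le (by ring)
  have hcvx := hg.2 hp hy (by linarith : (0:ℝ) ≤ 1 - t) ht0.le (by ring)
  have hmin' := hmin _ hz
  have hexp : ‖(1 - t) • p + t • y - x‖ ^ 2
      = ‖p - x‖ ^ 2 + 2 * (t * ⟪p - x, y - p⟫_ℝ) + t ^ 2 * ‖y - p‖ ^ 2 := by
    have h1 : (1 - t) • p + t • y - x = (p - x) + t • (y - p) := by module
    rw [h1, norm_add_sq_real, real_inner_smul_right, norm_smul]
    rw [Real.norm_eq_abs, abs_of_pos ht0]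
    ring
  have hcvx' : lam * g ((1 - t) • p + t • y) ≤ lam * ((1 - t) * g p + t * g y) :=
    mul_le_mul_of_nonneg_left hcvx hlam.le
  have hinner : ⟪x - p, y - p⟫_ℝ = - ⟪p - x, y - p⟫_ℝ := by
    rw [← neg_sub p x, inner_neg_left]
  rw [hexp] at hmin'
  have key : 0 ≤ lam * t * (g y - g p) + t * ⟪p - x, y - p⟫_ℝ
      + t ^ 2 / 2 * ‖y - p‖ ^ 2 := by nlinarith [hmin', hcvx']
  have key2 : ⟪x - p, y - p⟫_ℝ ≤ lam * (g y - g p) + t / 2 * ‖y - p‖ ^ 2 := by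
    rw [hinner]
    have h3 := mul_le_mul_of_nonneg_left key (le_of_lt (by positivity : (0:ℝ) < 1 / t))
    have htne : t ≠ 0 := ne_of_gt ht0
    field_simp at h3
    nlinarith [h3]
  have hbound : t / 2 * ‖y - p‖ ^ 2 ≤ ε := by
    have h1 : t * (‖y - p‖ ^ 2 + 1) ≤ 2 * ε := by
      have h2 := mul_le_mul_of_nonneg_right ht2 hnorm1.le
      rwa [div_mul_cancel₀ _ hnorm1.ne'] at h2
    nlinarith [ht0]
  linarith

/-- Key estimate for the extragradient step (Lemma from P. N. Anh): with `x* ∈ Sol(C, f)`,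
`y*` and `z*` the two prox-steps at `x` with stepsize `λ`, one has
`‖z* − x*‖² ≤ ‖x − x*‖² − (1 − 2λc₁)‖x − y*‖² − (1 − 2λc₂)‖y* − z*‖²`. -/
theorem extragradient_estimate
    {H : Type*} [NormedAddCommGroup H] [InnerProductSpace ℝ H] [CompleteSpace H]
    (C : Set H) (hCne : C.Nonempty) (hCcl : IsClosed C) (hCcv : Convex ℝ C)
    (f : H → H → ℝ)
    (hf0 : ∀ w ∈ C, f w w = 0)
    (hfconv : ∀ w ∈ C, ConvexOn ℝ C (f w))
    (hfpseudo : ∀ x ∈ C, ∀ y ∈ C, 0 ≤ f x y → f y x ≤ 0)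
    (c₁ c₂ : ℝ) (hc₁ : 0 < c₁) (hc₂ : 0 < c₂)
    (hflip : ∀ x ∈ C, ∀ y ∈ C, ∀ z ∈ C,
      f x y + f y z ≥ f x z - c₁ * ‖x - y‖ ^ 2 - c₂ * ‖y - z‖ ^ 2)
    (xstar : H) (hxstarC : xstar ∈ C) (hxstar : ∀ y ∈ C, f xstar y ≥ 0)
    (x : H) (hx : x ∈ C)
    (lam : ℝ) (hlam0 : 0 < lam) (hlam : lam < min (1 / (2 * c₁)) (1 / (2 * c₂)))
    (ystar : H) (hystarC : ystar ∈ C)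
    (hystar : ∀ y ∈ C,
      lam * f x ystar + (1 / 2) * ‖ystar - x‖ ^ 2 ≤ lam * f x y + (1 / 2) * ‖y - x‖ ^ 2)
    (zstar : H) (hzstarC : zstar ∈ C)
    (hzstar : ∀ y ∈ C,
      lam * f ystar zstar + (1 / 2) * ‖zstar - x‖ ^ 2 ≤
        lam * f ystar y + (1 / 2) * ‖y - x‖ ^ 2) :
    ‖zstar - xstar‖ ^ 2 ≤ ‖x - xstar‖ ^ 2 - (1 - 2 * lam * c₁) * ‖x - ystar‖ ^ 2
      - (1 - 2 * lam * c₂) * ‖ystar - zstar‖ ^ 2 := by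
  have hVIz : ⟪x - zstar, xstar - zstar⟫_ℝ ≤ lam * (f ystar xstar - f ystar zstar) :=
    prox_vi_aux hCcv (hfconv ystar hystarC) hlam0 hzstarC hzstar hxstarC
  have hVIy : ⟪x - ystar, zstar - ystar⟫_ℝ ≤ lam * (f x zstar - f x ystar) :=
    prox_vi_aux hCcv (hfconv x hx) hlam0 hystarC hystar hzstarC
  have hps : f ystar xstar ≤ 0 :=
    hfpseudo xstar hxstarC ystar hystarC (hxstar ystar hystarC)
  have hps' : lam * f ystar xstar ≤ 0 :=
    mul_nonpos_of_nonneg_of_nonpos hlam0.le hps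
  have hL : f x zstar - c₁ * ‖x - ystar‖ ^ 2 - c₂ * ‖ystar - zstar‖ ^ 2
      ≤ f x ystar + f ystar zstar := hflip x hx ystar hystarC zstar hzstarC
  have hL' := mul_le_mul_of_nonneg_left hL hlam0.le
  -- polarization identities
  have e1 : (x - zstar) - (xstar - zstar) = x - xstar := by abel
  have id1 : 2 * ⟪x - zstar, xstar - zstar⟫_ℝ
      = ‖x - zstar‖ ^ 2 + ‖xstar - zstar‖ ^ 2 - ‖x - xstar‖ ^ 2 := by
    rw [two_inner_eq_aux, e1]
  have e2 : (x - ystar) - (zstar - ystar) = x - zstar := by abel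
  have id2 : 2 * ⟪x - ystar, zstar - ystar⟫_ℝ
      = ‖x - ystar‖ ^ 2 + ‖zstar - ystar‖ ^ 2 - ‖x - zstar‖ ^ 2 := by
    rw [two_inner_eq_aux, e2]
  have hn1 : ‖xstar - zstar‖ ^ 2 = ‖zstar - xstar‖ ^ 2 := by rw [norm_sub_rev]
  have hn2 : ‖zstar - ystar‖ ^ 2 = ‖ystar - zstar‖ ^ 2 := by rw [norm_sub_rev]
  nlinarith [hVIz, hVIy, hps', hL', id1, id2, hn1, hn2]
end

section
/- Let H be a real Hilbert space, Q a nonempty closed convex subset of H, and g : Q × Q → ℝ a monotone bifunction on Q with g(u, u) = 0 for all u ∈ Q. Let α > 0, a ∈ H, and let w ∈ Q satisfy g(w, v) + (1/α)⟨v − w, w − a⟩ ≥ 0 for all v ∈ Q. If s ∈ Q satisfies g(s, v) ≥ 0 for all v ∈ Q, then ‖w − s‖² ≤ ‖a − s‖² − ‖w − a‖². -/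
/-! A solution `s` of the equilibrium problem and the resolvent point `w` satisfy
`g w s ≤ -g s w ≤ 0` by monotonicity, so testing the resolvent inequality at `v = s` gives
`⟪s - w, w - a⟫ ≥ 0`: the angle of the triangle `a, w, s` at `w` is not acute, and the estimate is
the corresponding inequality of Pythagoras. -/

theorem norm_sub_sq_le_of_inner_nonneg {H : Type*} [NormedAddCommGroup H] [InnerProductSpace ℝ H]
    {a s w : H} (h : 0 ≤ inner ℝ (s - w) (w - a)) :
    ‖w - s‖ ^ 2 ≤ ‖a - s‖ ^ 2 - ‖w - a‖ ^ 2 := by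
  have hdiff : a - s = (w - s) - (w - a) := by abel
  have hinner : inner ℝ (w - s) (w - a) = -inner ℝ (s - w) (w - a) := by
    rw [← inner_neg_left, neg_sub]
  rw [hdiff, norm_sub_sq_real (w - s) (w - a), hinner]
  linarith

theorem inner_nonneg_of_resolvent_of_equilibrium {H : Type*} [NormedAddCommGroup H]
    [InnerProductSpace ℝ H] {Q : Set H} {g : H → H → ℝ}
    (hmono : ∀ u ∈ Q, ∀ v ∈ Q, g u v + g v u ≤ 0) {α : ℝ} (hα : 0 < α) {a w s : H}
    (hwQ : w ∈ Q) (hw : ∀ v ∈ Q, g w v + (1 / α) * (inner ℝ (v - w) (w - a) : ℝ) ≥ 0)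
    (hsQ : s ∈ Q) (hs : ∀ v ∈ Q, g s v ≥ 0) :
    0 ≤ inner ℝ (s - w) (w - a) := by
  have hgws : g w s ≤ 0 := by linarith [hmono w hwQ s hsQ, hs w hwQ]
  have hscaled : 0 ≤ (1 / α) * inner ℝ (s - w) (w - a) := by linarith [hw s hsQ]
  exact nonneg_of_mul_nonneg_right hscaled (by positivity)

theorem resolvent_solution_estimate_general
    {H : Type*} [NormedAddCommGroup H] [InnerProductSpace ℝ H]
    (Q : Set H)
    (g : H → H → ℝ)
    (hmono : ∀ u ∈ Q, ∀ v ∈ Q, g u v + g v u ≤ 0)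
    (α : ℝ) (hα : 0 < α) (a : H)
    (w : H) (hwQ : w ∈ Q)
    (hw : ∀ v ∈ Q, g w v + (1 / α) * (inner ℝ (v - w) (w - a) : ℝ) ≥ 0)
    (s : H) (hsQ : s ∈ Q) (hs : ∀ v ∈ Q, g s v ≥ 0) :
    ‖w - s‖ ^ 2 ≤ ‖a - s‖ ^ 2 - ‖w - a‖ ^ 2 :=
  norm_sub_sq_le_of_inner_nonneg
    (inner_nonneg_of_resolvent_of_equilibrium hmono hα hwQ hw hsQ hs)

/-- If `w = T_α^g(a)` is a resolvent point and `s` solves the equilibrium problem EP(Q, g),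
then `‖w − s‖² ≤ ‖a − s‖² − ‖w − a‖²`. -/
theorem resolvent_solution_estimate
    {H : Type*} [NormedAddCommGroup H] [InnerProductSpace ℝ H] [CompleteSpace H]
    (Q : Set H) (hQne : Q.Nonempty) (hQcl : IsClosed Q) (hQcv : Convex ℝ Q)
    (g : H → H → ℝ)
    (hg0 : ∀ u ∈ Q, g u u = 0)
    (hmono : ∀ u ∈ Q, ∀ v ∈ Q, g u v + g v u ≤ 0)
    (α : ℝ) (hα : 0 < α) (a : H)
    (w : H) (hwQ : w ∈ Q)
    (hw : ∀ v ∈ Q, g w v + (1 / α) * (inner ℝ (v - w) (w - a) : ℝ) ≥ 0)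
    (s : H) (hsQ : s ∈ Q) (hs : ∀ v ∈ Q, g s v ≥ 0) :
    ‖w - s‖ ^ 2 ≤ ‖a - s‖ ^ 2 - ‖w - a‖ ^ 2 :=
  resolvent_solution_estimate_general Q g hmono α hα a w hwQ hw s hsQ hs
end

section
/- Let H be a real Hilbert space, Q a nonempty closed convex subset of H, g : Q × Q → ℝ a monotone bifunction on Q with g(u, u) = 0 for all u ∈ Q, and T : Q → Q a nonexpansive mapping. Let α > 0, a ∈ H, and let u ∈ Q satisfy g(u, v) + (1/α)⟨v − u, u − a⟩ ≥ 0 for all v ∈ Q. If s ∈ Q satisfies T(s) = s and g(s, v) ≥ 0 for all v ∈ Q, then ⟨a − s, T(u) − a⟩ ≤ −(1/2)‖u − a‖² − (1/2)‖T(u) − a‖². -/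
/-!
Testing the resolvent inequality at `v = s`, monotonicity and `g(s, u) ≥ 0` give
`⟨s - u, u - a⟩ ≥ 0`. Nonexpansiveness at the fixed point gives `‖T u - s‖ ≤ ‖u - s‖`; expanding
both squared norms around `a` turns these two facts into the estimate.
-/

open scoped InnerProductSpace

theorem real_inner_sub_resolvent_nonneg {H : Type*} [NormedAddCommGroup H]
    [InnerProductSpace ℝ H] {Q : Set H} {g : H → H → ℝ}
    (hmono : ∀ u ∈ Q, ∀ v ∈ Q, g u v + g v u ≤ 0) {α : ℝ} (hα : 0 < α) {a u s : H}
    (huQ : u ∈ Q) (hu : ∀ v ∈ Q, g u v + (1 / α) * ⟪v - u, u - a⟫_ℝ ≥ 0)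
    (hsQ : s ∈ Q) (hs : ∀ v ∈ Q, g s v ≥ 0) :
    0 ≤ ⟪s - u, u - a⟫_ℝ := by
  have hgus : g u s ≤ 0 := by linarith [hmono u huQ s hsQ, hs u huQ]
  have hscaled : 0 ≤ (1 / α) * ⟪s - u, u - a⟫_ℝ := by linarith [hu s hsQ]
  exact (mul_nonneg_iff_of_pos_left (by positivity)).mp hscaled

theorem real_inner_sub_le_of_norm_sub_le {H : Type*} [NormedAddCommGroup H]
    [InnerProductSpace ℝ H] {a s u w : H} (hsu : 0 ≤ ⟪s - u, u - a⟫_ℝ)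
    (hw : ‖w - s‖ ≤ ‖u - s‖) :
    ⟪a - s, w - a⟫_ℝ ≤ -(1 / 2) * ‖u - a‖ ^ 2 - (1 / 2) * ‖w - a‖ ^ 2 := by
  have hw_sq : ‖w - s‖ ^ 2 ≤ ‖u - s‖ ^ 2 := pow_le_pow_left₀ (norm_nonneg _) hw 2
  have expand : ∀ x : H, ‖x - s‖ ^ 2 = ‖x - a‖ ^ 2 + 2 * ⟪x - a, a - s⟫_ℝ + ‖a - s‖ ^ 2 := by
    intro x
    rw [← norm_add_sq_real, sub_add_sub_cancel]
  have hsu' : ⟪s - u, u - a⟫_ℝ = -‖u - a‖ ^ 2 - ⟪u - a, a - s⟫_ℝ := by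
    rw [show s - u = -((u - a) + (a - s)) by abel, inner_neg_left, inner_add_left,
      real_inner_self_eq_norm_sq, real_inner_comm]
    ring
  rw [expand w, expand u] at hw_sq
  linarith [real_inner_comm (a - s) (w - a)]

theorem resolvent_fixedpoint_inner_estimate_general
    {H : Type*} [NormedAddCommGroup H] [InnerProductSpace ℝ H]
    (Q : Set H)
    (g : H → H → ℝ)
    (hmono : ∀ u ∈ Q, ∀ v ∈ Q, g u v + g v u ≤ 0)
    (T : H → H)
    (hTne : ∀ x ∈ Q, ∀ y ∈ Q, ‖T x - T y‖ ≤ ‖x - y‖)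
    (α : ℝ) (hα : 0 < α) (a : H)
    (u : H) (huQ : u ∈ Q)
    (hu : ∀ v ∈ Q, g u v + (1 / α) * (inner ℝ (v - u) (u - a) : ℝ) ≥ 0)
    (s : H) (hsQ : s ∈ Q) (hsfix : T s = s) (hs : ∀ v ∈ Q, g s v ≥ 0) :
    (inner ℝ (a - s) (T u - a) : ℝ) ≤ -(1 / 2) * ‖u - a‖ ^ 2 - (1 / 2) * ‖T u - a‖ ^ 2 := by
  have hsu := real_inner_sub_resolvent_nonneg hmono hα huQ hu hsQ hs
  have hTu : ‖T u - s‖ ≤ ‖u - s‖ := by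
    simpa only [hsfix] using hTne u huQ s hsQ
  exact real_inner_sub_le_of_norm_sub_le hsu hTu

/-- Key inner-product estimate: if `u = T_α^g(a)` and `s` is a common solution/fixed point
(`T(s) = s`, `g(s, ·) ≥ 0`), then `⟨a − s, T(u) − a⟩ ≤ −(1/2)‖u − a‖² − (1/2)‖T(u) − a‖²`. -/
theorem resolvent_fixedpoint_inner_estimate
    {H : Type*} [NormedAddCommGroup H] [InnerProductSpace ℝ H] [CompleteSpace H]
    (Q : Set H) (hQne : Q.Nonempty) (hQcl : IsClosed Q) (hQcv : Convex ℝ Q)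
    (g : H → H → ℝ)
    (hg0 : ∀ u ∈ Q, g u u = 0)
    (hmono : ∀ u ∈ Q, ∀ v ∈ Q, g u v + g v u ≤ 0)
    (T : H → H) (hT : Set.MapsTo T Q Q)
    (hTne : ∀ x ∈ Q, ∀ y ∈ Q, ‖T x - T y‖ ≤ ‖x - y‖)
    (α : ℝ) (hα : 0 < α) (a : H)
    (u : H) (huQ : u ∈ Q)
    (hu : ∀ v ∈ Q, g u v + (1 / α) * (inner ℝ (v - u) (u - a) : ℝ) ≥ 0)
    (s : H) (hsQ : s ∈ Q) (hsfix : T s = s) (hs : ∀ v ∈ Q, g s v ≥ 0) :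
    (inner ℝ (a - s) (T u - a) : ℝ) ≤ -(1 / 2) * ‖u - a‖ ^ 2 - (1 / 2) * ‖T u - a‖ ^ 2 :=
  resolvent_fixedpoint_inner_estimate_general Q g hmono T hTne α hα a u huQ hu s hsQ hsfix hs
end

section
/- Let H₁, H₂ be real Hilbert spaces, C ⊆ H₁ and Q ⊆ H₂ nonempty closed convex sets, A : H₁ → H₂ a bounded linear operator with adjoint A*, g : Q × Q → ℝ a monotone bifunction on Q with g(u, u) = 0 for all u ∈ Q, and T : Q → Q a nonexpansive mapping. Let x* ∈ C be such that A x* ∈ Q, T(A x*) = A x*, and g(A x*, v) ≥ 0 for all v ∈ Q. Let t ∈ C, μ > 0 with μ‖A‖² < 1, α > 0, and let u ∈ Q satisfy g(u, v) + (1/α)⟨v − u, u − A t⟩ ≥ 0 for all v ∈ Q. Then the metric projection x⁺ = P_C(t + μ A*(T(u) − A t)) satisfies ‖x⁺ − x*‖² ≤ ‖t − x*‖² − μ(1 − μ‖A‖²)‖T(u) − A t‖² − μ‖u − A t‖². -/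
/-!
The resolvent point `u` of `A t` and the projection `x⁺` of `z = t + μ A*(T u - A t)` both satisfy
a variational inequality of the form `0 ≤ ⟪x - u, u - y⟫` (with `x = A x*`, resp. `x = x*`; for `u`
this uses monotonicity of `g` and that `A x*` is an equilibrium point), and any such inequality
gives `‖u - x‖² + ‖u - y‖² ≤ ‖y - x‖²`. Since `T` is nonexpansive and fixes `A x*`, this yields
`‖T u - A x*‖² + ‖u - A t‖² ≤ ‖A t - A x*‖²`, an upper bound on `2⟪A t - A x*, T u - A t⟫`.
That inner product is exactly the cross term of `‖z - x*‖²` once `A*` is moved across, and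
`‖A*‖ = ‖A‖` controls the quadratic term.
-/

open ContinuousLinearMap

section InnerProduct

variable {E : Type*} [NormedAddCommGroup E] [InnerProductSpace ℝ E]

theorem norm_sub_sq_add_norm_sub_sq_le_of_inner_nonneg {x u y : E}
    (h : 0 ≤ (inner ℝ (x - u) (u - y) : ℝ)) :
    ‖u - x‖ ^ 2 + ‖u - y‖ ^ 2 ≤ ‖y - x‖ ^ 2 := by
  have hexp := norm_add_sq_real (u - x) (y - u)
  rw [show u - x + (y - u) = y - x by abel, norm_sub_rev y u] at hexp
  have hinner : (inner ℝ (u - x) (y - u) : ℝ) = inner ℝ (x - u) (u - y) := by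
    rw [← neg_sub x u, ← neg_sub u y, inner_neg_neg]
  linarith

theorem two_mul_inner_le_of_norm_sq_add_le {y p v : E} {s : ℝ}
    (h : ‖v - p‖ ^ 2 + s ≤ ‖y - p‖ ^ 2) :
    2 * (inner ℝ (y - p) (v - y) : ℝ) ≤ -‖v - y‖ ^ 2 - s := by
  have hexp := norm_add_sq_real (y - p) (v - y)
  rw [show y - p + (v - y) = v - p by abel] at hexp
  linarith

theorem inner_nonneg_of_resolvent {Q : Set E} {g : E → E → ℝ} (hmono : ∀ u ∈ Q, ∀ v ∈ Q, g u v + g v u ≤ 0)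
    {x : E} (hxQ : x ∈ Q) (hx : ∀ v ∈ Q, g x v ≥ 0)
    {α : ℝ} (hα : 0 < α) {y u : E} (huQ : u ∈ Q)
    (hu : ∀ v ∈ Q, g u v + (1 / α) * (inner ℝ (v - u) (u - y) : ℝ) ≥ 0) :
    0 ≤ (inner ℝ (x - u) (u - y) : ℝ) := by
  have hgux : g u x ≤ 0 := by linarith [hmono u huQ x hxQ, hx u huQ]
  have hscaled : 0 ≤ (1 / α) * (inner ℝ (x - u) (u - y) : ℝ) := by linarith [hu x hxQ]
  exact nonneg_of_mul_nonneg_right hscaled (by positivity)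

end InnerProduct

theorem norm_add_smul_adjoint_sq_le {E F : Type*}
    [NormedAddCommGroup E] [InnerProductSpace ℝ E] [CompleteSpace E]
    [NormedAddCommGroup F] [InnerProductSpace ℝ F] [CompleteSpace F]
    (A : E →L[ℝ] F) (d : E) (w : F) (μ : ℝ) :
    ‖d + μ • adjoint A w‖ ^ 2 ≤
      ‖d‖ ^ 2 + 2 * μ * (inner ℝ (A d) w : ℝ) + μ ^ 2 * ‖A‖ ^ 2 * ‖w‖ ^ 2 := by
  have hadj : ‖adjoint A w‖ ≤ ‖A‖ * ‖w‖ := by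
    simpa only [LinearIsometryEquiv.norm_map] using (adjoint A).le_opNorm w
  have hstep : ‖μ • adjoint A w‖ ^ 2 ≤ μ ^ 2 * ‖A‖ ^ 2 * ‖w‖ ^ 2 := by
    calc ‖μ • adjoint A w‖ ^ 2 = μ ^ 2 * ‖adjoint A w‖ ^ 2 := by
          rw [norm_smul, mul_pow, Real.norm_eq_abs, sq_abs]
      _ ≤ μ ^ 2 * (‖A‖ * ‖w‖) ^ 2 := by gcongr
      _ = μ ^ 2 * ‖A‖ ^ 2 * ‖w‖ ^ 2 := by ring
  rw [norm_add_sq_real, real_inner_smul_right, adjoint_inner_right]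
  linarith

theorem projection_step_estimate_general
    {H₁ : Type*} [NormedAddCommGroup H₁] [InnerProductSpace ℝ H₁] [CompleteSpace H₁]
    {H₂ : Type*} [NormedAddCommGroup H₂] [InnerProductSpace ℝ H₂] [CompleteSpace H₂]
    (C : Set H₁)
    (Q : Set H₂)
    (A : H₁ →L[ℝ] H₂)
    (g : H₂ → H₂ → ℝ)
    (hmono : ∀ u ∈ Q, ∀ v ∈ Q, g u v + g v u ≤ 0)
    (T : H₂ → H₂)
    (hTne : ∀ x ∈ Q, ∀ y ∈ Q, ‖T x - T y‖ ≤ ‖x - y‖)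
    (xstar : H₁) (hxstarC : xstar ∈ C) (hAxstarQ : A xstar ∈ Q)
    (hfix : T (A xstar) = A xstar) (hsol : ∀ v ∈ Q, g (A xstar) v ≥ 0)
    (t : H₁)
    (μ : ℝ) (hμ0 : 0 < μ)
    (α : ℝ) (hα : 0 < α)
    (u : H₂) (huQ : u ∈ Q)
    (hu : ∀ v ∈ Q, g u v + (1 / α) * (inner ℝ (v - u) (u - A t) : ℝ) ≥ 0)
    (xplus : H₁)
    (hproj : ∀ w ∈ C,
      (inner ℝ ((t + μ • (ContinuousLinearMap.adjoint A) (T u - A t)) - xplus) (w - xplus) : ℝ) ≤ 0) :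
    ‖xplus - xstar‖ ^ 2 ≤ ‖t - xstar‖ ^ 2
      - μ * (1 - μ * ‖A‖ ^ 2) * ‖T u - A t‖ ^ 2 - μ * ‖u - A t‖ ^ 2 := by
  set z := t + μ • adjoint A (T u - A t)
  have hxplus : ‖xplus - xstar‖ ^ 2 + ‖xplus - z‖ ^ 2 ≤ ‖z - xstar‖ ^ 2 := by
    refine norm_sub_sq_add_norm_sub_sq_le_of_inner_nonneg ?_
    rw [← neg_sub z xplus, inner_neg_right, real_inner_comm]
    linarith [hproj xstar hxstarC]
  have hgrad := norm_add_smul_adjoint_sq_le A (t - xstar) (T u - A t) μ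
  rw [sub_add_eq_add_sub, map_sub A t xstar] at hgrad
  have hres := norm_sub_sq_add_norm_sub_sq_le_of_inner_nonneg
    (inner_nonneg_of_resolvent hmono hAxstarQ hsol hα huQ hu)
  have hTu : ‖T u - A xstar‖ ^ 2 ≤ ‖u - A xstar‖ ^ 2 := by
    gcongr
    simpa only [hfix] using hTne u huQ (A xstar) hAxstarQ
  have hcross := two_mul_inner_le_of_norm_sq_add_le (y := A t) (p := A xstar) (v := T u)
    (s := ‖u - A t‖ ^ 2) (by linarith)
  linarith [mul_le_mul_of_nonneg_left hcross hμ0.le, sq_nonneg ‖xplus - z‖]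

/-- Main one-step estimate: with `x*` a split solution, `u = T_α^g(A t)` a resolvent point and
`x⁺ = P_C(t + μA*(T(u) − At))`, one has
`‖x⁺ − x*‖² ≤ ‖t − x*‖² − μ(1 − μ‖A‖²)‖T(u) − At‖² − μ‖u − At‖²`. -/
theorem projection_step_estimate
    {H₁ : Type*} [NormedAddCommGroup H₁] [InnerProductSpace ℝ H₁] [CompleteSpace H₁]
    {H₂ : Type*} [NormedAddCommGroup H₂] [InnerProductSpace ℝ H₂] [CompleteSpace H₂]
    (C : Set H₁) (hCne : C.Nonempty) (hCcl : IsClosed C) (hCcv : Convex ℝ C)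
    (Q : Set H₂) (hQne : Q.Nonempty) (hQcl : IsClosed Q) (hQcv : Convex ℝ Q)
    (A : H₁ →L[ℝ] H₂)
    (g : H₂ → H₂ → ℝ)
    (hg0 : ∀ u ∈ Q, g u u = 0)
    (hmono : ∀ u ∈ Q, ∀ v ∈ Q, g u v + g v u ≤ 0)
    (T : H₂ → H₂) (hT : Set.MapsTo T Q Q)
    (hTne : ∀ x ∈ Q, ∀ y ∈ Q, ‖T x - T y‖ ≤ ‖x - y‖)
    (xstar : H₁) (hxstarC : xstar ∈ C) (hAxstarQ : A xstar ∈ Q)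
    (hfix : T (A xstar) = A xstar) (hsol : ∀ v ∈ Q, g (A xstar) v ≥ 0)
    (t : H₁) (htC : t ∈ C)
    (μ : ℝ) (hμ0 : 0 < μ) (hμ : μ * ‖A‖ ^ 2 < 1)
    (α : ℝ) (hα : 0 < α)
    (u : H₂) (huQ : u ∈ Q)
    (hu : ∀ v ∈ Q, g u v + (1 / α) * (inner ℝ (v - u) (u - A t) : ℝ) ≥ 0)
    (xplus : H₁) (hxplusC : xplus ∈ C)
    (hproj : ∀ w ∈ C,
      (inner ℝ ((t + μ • (ContinuousLinearMap.adjoint A) (T u - A t)) - xplus) (w - xplus) : ℝ) ≤ 0) :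
    ‖xplus - xstar‖ ^ 2 ≤ ‖t - xstar‖ ^ 2
      - μ * (1 - μ * ‖A‖ ^ 2) * ‖T u - A t‖ ^ 2 - μ * ‖u - A t‖ ^ 2 :=
  projection_step_estimate_general C Q A g hmono T hTne xstar hxstarC hAxstarQ hfix hsol t μ hμ0 α
    hα u huQ hu xplus hproj
end

section
/- (Weak convergence for the split equilibrium problem.) Let H₁, H₂ be real Hilbert spaces, C ⊆ H₁ and Q ⊆ H₂ nonempty closed convex sets, A : H₁ → H₂ a bounded linear operator with adjoint A*, g : Q × Q → ℝ satisfying Assumptions A, and f : C × C → ℝ satisfying Assumptions B with constants c₁, c₂ > 0. Let x¹ ∈ C, let 0 < a ≤ b < min{1/(2c₁), 1/(2c₂)} and {λ_k} ⊆ [a, b], let μ > 0 with μ‖A‖² < 1, and let {α_k} ⊆ (0, ∞) with liminf_{k→∞} α_k > 0. Suppose the sequences {x^k}, {y^k}, {z^k}, {u^k} satisfy, for every k: y^k ∈ C minimizes y ↦ λ_k f(x^k, y) + (1/2)‖y − x^k‖² over C; z^k ∈ C minimizes y ↦ λ_k f(y^k, y) + (1/2)‖y − x^k‖² over C; u^k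 ∈ Q satisfies g(u^k, v) + (1/α_k)⟨v − u^k, u^k − A z^k⟩ ≥ 0 for all v ∈ Q; and x^{k+1} = P_C(z^k + μ A*(u^k − A z^k)). If Ω = {x* ∈ C : f(x*, y) ≥ 0 for all y ∈ C, A x* ∈ Q, and g(A x*, v) ≥ 0 for all v ∈ Q} is nonempty, then there exists p ∈ Ω such that {x^k} and {z^k} converge weakly to p and {u^k} converges weakly to A p ∈ Sol(Q, g). -/
/-!
For `p ∈ Ω`, pseudomonotonicity and the Lipschitz-type inequality give for the extragradient step
`‖z k - p‖² ≤ ‖x k - p‖² - (1 - 2 λₖ c₁) ‖x k - y k‖² - (1 - 2 λₖ c₂) ‖y k - z k‖²`, and, as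
`μ ‖A‖² < 1`, the resolvent-and-projection step gives
`‖x (k + 1) - p‖² ≤ ‖z k - p‖² - μ ‖u k - A (z k)‖²`. Hence `‖x k - p‖` converges for every
`p ∈ Ω`, and `x - y`, `y - z`, `u - A z` tend to `0`. If `x ∘ φ ⇀ q`, the weak continuity of `f`
and the prox inequality give `f q ≥ 0` on `C`, while `u ∘ φ ⇀ A q`, the resolvent inequality and
the weak lower semicontinuity of `g v` give `g v (A q) ≤ 0` on `Q`, which Minty's lemma turns into
`A q ∈ Sol(Q, g)`. So every weak cluster point of `x` lies in `Ω`, and Opial's lemma concludes.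
-/

open Filter Topology Set
open scoped RealInnerProductSpace

theorem tendsto_of_add_le {a d : ℕ → ℝ} (ha : ∀ k, 0 ≤ a k) (hd : ∀ k, 0 ≤ d k)
    (h : ∀ k, a (k + 1) + d k ≤ a k) :
    (∃ L, Tendsto a atTop (𝓝 L)) ∧ Tendsto d atTop (𝓝 0) := by
  have hanti : Antitone a := antitone_nat_of_succ_le fun k => by linarith [h k, hd k]
  have hL := tendsto_atTop_ciInf hanti ⟨0, by rintro _ ⟨k, rfl⟩; exact ha k⟩
  refine ⟨⟨_, hL⟩, squeeze_zero hd (fun k => le_sub_iff_add_le'.2 (h k)) ?_⟩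
  simpa using hL.sub (hL.comp (tendsto_add_atTop_nat 1))

theorem tendsto_zero_of_mul_norm_sq_le {E : Type*} [SeminormedAddCommGroup E] {v : ℕ → E}
    {d : ℕ → ℝ} {c : ℝ} (hc : 0 < c) (h : ∀ k, c * ‖v k‖ ^ 2 ≤ d k)
    (hd : Tendsto d atTop (𝓝 0)) : Tendsto v atTop (𝓝 0) := by
  have hsq : Tendsto (fun k => ‖v k‖ ^ 2) atTop (𝓝 0) :=
    squeeze_zero (fun k => sq_nonneg _) (fun k => (le_div_iff₀' hc).2 (h k))
      (by simpa using hd.div_const c)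
  rw [tendsto_zero_iff_norm_tendsto_zero]
  simpa [Real.sqrt_sq (norm_nonneg _)] using hsq.sqrt

section InnerProductSpace

variable {H : Type*} [NormedAddCommGroup H] [InnerProductSpace ℝ H]

lemma two_mul_inner_sub_sub_eq (a b c : H) :
    2 * ⟪a - b, c - a⟫ = ‖b - c‖ ^ 2 - ‖b - a‖ ^ 2 - ‖a - c‖ ^ 2 := by
  rw [show b - c = (b - a) + (a - c) by abel, norm_add_sq_real, ← inner_neg_neg, neg_sub, neg_sub]
  ring

lemma two_mul_inner_sub_eq (v p q : H) :
    2 * ⟪v, p - q⟫ = ‖v - q‖ ^ 2 - ‖v - p‖ ^ 2 + ‖p‖ ^ 2 - ‖q‖ ^ 2 := by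
  rw [norm_sub_sq_real, norm_sub_sq_real, inner_sub_right]
  ring

def WeakTendsto (x : ℕ → H) (p : H) : Prop :=
  ∀ w : H, Tendsto (fun k => ⟪x k, w⟫) atTop (𝓝 ⟪p, w⟫)

namespace WeakTendsto

variable {x y : ℕ → H} {p : H}

lemma comp (h : WeakTendsto x p) {φ : ℕ → ℕ} (hφ : Tendsto φ atTop atTop) :
    WeakTendsto (x ∘ φ) p :=
  fun w => (h w).comp hφ

lemma const_sub (h : WeakTendsto x p) (c : H) : WeakTendsto (fun k => c - x k) (c - p) :=
  fun w => by simpa only [inner_sub_left] using tendsto_const_nhds.sub (h w)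

lemma of_tendsto_sub (h : WeakTendsto x p) (hxy : Tendsto (fun k => x k - y k) atTop (𝓝 0)) :
    WeakTendsto y p := fun w => by
  have hlim : Tendsto (fun k => ⟪x k - y k, w⟫) atTop (𝓝 0) := by
    simpa using hxy.inner (tendsto_const_nhds (x := w))
  simpa only [inner_sub_left, sub_sub_cancel, sub_zero] using (h w).sub hlim

lemma map [CompleteSpace H] {E : Type*} [NormedAddCommGroup E] [InnerProductSpace ℝ E]
    [CompleteSpace E] (h : WeakTendsto x p) (A : H →L[ℝ] E) :
    WeakTendsto (fun k => A (x k)) (A p) := fun w => by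
  simpa only [ContinuousLinearMap.adjoint_inner_right] using h (ContinuousLinearMap.adjoint A w)

lemma exists_norm_le [CompleteSpace H] (h : WeakTendsto x p) : ∃ M, ∀ k, ‖x k‖ ≤ M := by
  obtain ⟨M, hM⟩ := banach_steinhaus (g := fun k => innerSL ℝ (x k)) fun w => by
    obtain ⟨C, hC⟩ := (h w).norm.bddAbove_range
    exact ⟨C, fun k => hC ⟨k, rfl⟩⟩
  exact ⟨M, fun k => by simpa only [innerSL_apply_norm] using hM k⟩

lemma tendsto_inner_zero [CompleteSpace H] (h : WeakTendsto x p) {b : ℕ → H}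
    (hb : Tendsto b atTop (𝓝 0)) : Tendsto (fun k => ⟪x k, b k⟫) atTop (𝓝 0) := by
  obtain ⟨M, hM⟩ := h.exists_norm_le
  refine squeeze_zero_norm (fun k => (norm_inner_le_norm _ _).trans
    (mul_le_mul_of_nonneg_right (hM k) (norm_nonneg _))) ?_
  simpa using (tendsto_norm_zero.comp hb).const_mul M

lemma mem_of_isClosed_of_convex [CompleteSpace H] {S : Set H} (hcl : IsClosed S)
    (hcv : Convex ℝ S) (hx : ∀ k, x k ∈ S) (h : WeakTendsto x p) : p ∈ S := by
  by_contra hp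
  obtain ⟨φ, r, hφp, hφS⟩ := geometric_hahn_banach_point_closed hcv hcl hp
  obtain ⟨w, rfl⟩ := (InnerProductSpace.toDual ℝ H).surjective φ
  simp only [InnerProductSpace.toDual_apply_apply] at hφp hφS
  have hlim : Tendsto (fun k => ⟪w, x k⟫) atTop (𝓝 ⟪w, p⟫) := by
    simpa only [real_inner_comm w] using h w
  linarith [ge_of_tendsto' hlim fun k => (hφS _ (hx k)).le]

end WeakTendsto

theorem exists_weakTendsto_subseq [CompleteSpace H] {x : ℕ → H} {M : ℝ}
    (hM : ∀ k, ‖x k‖ ≤ M) : ∃ q : H, ∃ φ : ℕ → ℕ, StrictMono φ ∧ WeakTendsto (x ∘ φ) q := by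
  -- sequential Banach–Alaoglu in the closed span of the sequence, which is separable
  set K := (Submodule.span ℝ (range x)).topologicalClosure
  have hxK : ∀ k, x k ∈ K :=
    fun k => Submodule.le_topologicalClosure _ (Submodule.subset_span ⟨k, rfl⟩)
  have : CompleteSpace K := (Submodule.isClosed_topologicalClosure _).completeSpace_coe
  have : TopologicalSpace.SeparableSpace K := by
    refine TopologicalSpace.IsSeparable.separableSpace ?_
    rw [Submodule.topologicalClosure_coe]
    exact ((countable_range x).isSeparable.span).closure
  let F : ℕ → WeakDual ℝ K := fun k => (InnerProductSpace.toDual ℝ K ⟨x k, hxK k⟩).toWeakDual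
  have hF : ∀ k, F k ∈ WeakDual.toStrongDual ⁻¹' Metric.closedBall 0 M := fun k => by
    change dist (InnerProductSpace.toDual ℝ K ⟨x k, hxK k⟩) 0 ≤ M
    rw [dist_zero_right, LinearIsometryEquiv.norm_map]
    exact hM k
  obtain ⟨ℓ, -, φ, hφ, hlim⟩ := WeakDual.isSeqCompact_closedBall ℝ K 0 M hF
  refine ⟨(InnerProductSpace.toDual ℝ K).symm (WeakDual.toStrongDual ℓ), φ, hφ, fun w => ?_⟩
  -- `⟪v, w⟫ = ⟪v, P_K w⟫` for `v ∈ K`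
  convert ((WeakDual.eval_continuous (K.orthogonalProjectionOnto w)).tendsto ℓ).comp hlim
    using 2 with k
  · simp [F, InnerProductSpace.toDual_apply_apply]
  · rw [← Submodule.inner_orthogonalProjectionOnto_eq_of_mem_left,
      InnerProductSpace.toDual_symm_apply]
    rfl

/-- **Opial's lemma**. -/
theorem exists_weakTendsto_of_tendsto_norm_sub_sq [CompleteSpace H] {x : ℕ → H} {S : Set H}
    (hS : S.Nonempty) (hdist : ∀ p ∈ S, ∃ L, Tendsto (fun k => ‖x k - p‖ ^ 2) atTop (𝓝 L))
    (hclus : ∀ φ : ℕ → ℕ, Tendsto φ atTop atTop → ∀ q, WeakTendsto (x ∘ φ) q → q ∈ S) :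
    ∃ p ∈ S, WeakTendsto x p := by
  obtain ⟨M, hM⟩ : ∃ M, ∀ k, ‖x k‖ ≤ M := by
    obtain ⟨p₀, hp₀⟩ := hS
    obtain ⟨R, hR⟩ := (hdist p₀ hp₀).choose_spec.bddAbove_range
    refine ⟨√R + ‖p₀‖, fun k => ?_⟩
    calc ‖x k‖ ≤ ‖x k - p₀‖ + ‖p₀‖ := norm_le_norm_sub_add _ _
      _ ≤ √R + ‖p₀‖ := by
        gcongr
        simpa using Real.abs_le_sqrt (hR ⟨k, rfl⟩)
  have huniq : ∀ φ ψ : ℕ → ℕ, Tendsto φ atTop atTop → Tendsto ψ atTop atTop → ∀ p q,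
      WeakTendsto (x ∘ φ) p → WeakTendsto (x ∘ ψ) q → p = q := by
    intro φ ψ hφ hψ p q hp hq
    obtain ⟨Lp, hLp⟩ := hdist p (hclus φ hφ p hp)
    obtain ⟨Lq, hLq⟩ := hdist q (hclus ψ hψ q hq)
    -- `⟪x k, p - q⟫` converges, so its limits along both subsequences coincide
    have hlim : Tendsto (fun k => 2 * ⟪x k, p - q⟫) atTop
        (𝓝 (Lq - Lp + ‖p‖ ^ 2 - ‖q‖ ^ 2)) := by
      simp only [two_mul_inner_sub_eq]
      exact ((hLq.sub hLp).add_const _).sub_const _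
    have hpq : 2 * ⟪p, p - q⟫ = 2 * ⟪q, p - q⟫ :=
      (tendsto_nhds_unique ((hp (p - q)).const_mul 2) (hlim.comp hφ)).trans
        (tendsto_nhds_unique ((hq (p - q)).const_mul 2) (hlim.comp hψ)).symm
    rw [← sub_eq_zero, ← inner_self_eq_zero (𝕜 := ℝ), inner_sub_left]
    linarith
  obtain ⟨p, φ, hφ, hp⟩ := exists_weakTendsto_subseq hM
  refine ⟨p, hclus φ hφ.tendsto_atTop p hp, fun w => tendsto_of_subseq_tendsto fun ns hns => ?_⟩
  obtain ⟨q, ψ, hψ, hq⟩ := exists_weakTendsto_subseq (x := x ∘ ns) fun k => hM _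
  have hqp : q = p := huniq (ns ∘ ψ) φ (hns.comp hψ.tendsto_atTop) hφ.tendsto_atTop q p hq hp
  exact ⟨ψ, hqp ▸ hq w⟩

theorem ConvexOn.mul_sub_le_inner_of_isMinOn {C : Set H} {φ : H → ℝ} (hφ : ConvexOn ℝ C φ)
    {c : ℝ} (hc : 0 ≤ c) {x m w : H}
    (hmin : IsMinOn (fun v => c * φ v + 1 / 2 * ‖v - x‖ ^ 2) C m) (hm : m ∈ C) (hw : w ∈ C) :
    c * (φ m - φ w) ≤ ⟪m - x, w - m⟫ := by
  have hsegment : ∀ t ∈ Ioc (0 : ℝ) 1,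
      c * (φ m - φ w) ≤ ⟪m - x, w - m⟫ + t * (‖w - m‖ ^ 2 / 2) := by
    rintro t ⟨ht0, ht1⟩
    have ht : 0 ≤ 1 - t := by linarith
    have hmin_t := isMinOn_iff.1 hmin _ (hφ.1 hm hw ht ht0.le (by ring))
    have hconv := hφ.2 hm hw ht ht0.le (by ring)
    have hnorm : ‖(1 - t) • m + t • w - x‖ ^ 2
        = ‖m - x‖ ^ 2 + 2 * t * ⟪m - x, w - m⟫ + t ^ 2 * ‖w - m‖ ^ 2 := by
      rw [show (1 - t) • m + t • w - x = (m - x) + t • (w - m) by module, norm_add_sq_real,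
        real_inner_smul_right, norm_smul, Real.norm_of_nonneg ht0.le]
      ring
    simp only [smul_eq_mul] at hconv
    rw [hnorm] at hmin_t
    refine le_of_mul_le_mul_left ?_ ht0
    nlinarith [mul_le_mul_of_nonneg_left hconv hc]
  have hlim : Tendsto (fun t : ℝ => ⟪m - x, w - m⟫ + t * (‖w - m‖ ^ 2 / 2)) (𝓝[>] 0)
      (𝓝 ⟪m - x, w - m⟫) := by
    refine tendsto_nhdsWithin_of_tendsto_nhds ?_
    simpa using ((continuous_id.mul continuous_const).tendsto (0 : ℝ)).const_add ⟪m - x, w - m⟫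
  exact ge_of_tendsto hlim (eventually_of_mem (Ioc_mem_nhdsGT one_pos) hsegment)

theorem norm_sub_sq_le_of_extragradient {C : Set H} {f : H → H → ℝ} {c₁ c₂ lam : ℝ}
    (hlam : 0 ≤ lam) {x y z p : H} (hy : y ∈ C) (hz : z ∈ C) (hp : p ∈ C)
    (hfx : ConvexOn ℝ C (f x)) (hfy : ConvexOn ℝ C (f y))
    (hymin : IsMinOn (fun w => lam * f x w + 1 / 2 * ‖w - x‖ ^ 2) C y)
    (hzmin : IsMinOn (fun w => lam * f y w + 1 / 2 * ‖w - x‖ ^ 2) C z)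
    (hfyp : f y p ≤ 0)
    (hlip : f x z - c₁ * ‖x - y‖ ^ 2 - c₂ * ‖y - z‖ ^ 2 ≤ f x y + f y z) :
    ‖z - p‖ ^ 2 ≤
      ‖x - p‖ ^ 2 - (1 - 2 * lam * c₁) * ‖x - y‖ ^ 2 - (1 - 2 * lam * c₂) * ‖y - z‖ ^ 2 := by
  have hVIy := hfx.mul_sub_le_inner_of_isMinOn hlam hymin hy hz
  have hVIz := hfy.mul_sub_le_inner_of_isMinOn hlam hzmin hz hp
  have h1 := two_mul_inner_sub_sub_eq y x z
  have h2 := two_mul_inner_sub_sub_eq z x p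
  have h3 : lam * (-c₁ * ‖x - y‖ ^ 2 - c₂ * ‖y - z‖ ^ 2) ≤
      lam * (f x y - f x z + (f y z - f y p)) :=
    mul_le_mul_of_nonneg_left (by linarith) hlam
  nlinarith

theorem nonneg_of_weakTendsto_of_isMinOn [CompleteSpace H] {C : Set H} {f : H → H → ℝ} {a : ℝ}
    (ha : 0 < a) {lam : ℕ → ℝ} (hlam : ∀ k, a ≤ lam k) {x y : ℕ → H} {q w : H}
    (hf : ∀ k, ConvexOn ℝ C (f (x k)))
    (hymin : ∀ k, IsMinOn (fun v => lam k * f (x k) v + 1 / 2 * ‖v - x k‖ ^ 2) C (y k))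
    (hy : ∀ k, y k ∈ C) (hw : w ∈ C) (hyq : WeakTendsto y q)
    (hxy : Tendsto (fun k => x k - y k) atTop (𝓝 0))
    (hfxy : Tendsto (fun k => f (x k) (y k)) atTop (𝓝 0))
    (hfxw : Tendsto (fun k => f (x k) w) atTop (𝓝 (f q w))) :
    0 ≤ f q w := by
  have hinner : Tendsto (fun k => ⟪x k - y k, w - y k⟫) atTop (𝓝 0) := by
    simpa only [real_inner_comm] using (hyq.const_sub w).tendsto_inner_zero hxy
  have hres : Tendsto (fun k => ⟪x k - y k, w - y k⟫ / lam k) atTop (𝓝 0) := by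
    refine squeeze_zero_norm (fun k => ?_) (by simpa using hinner.norm.div_const a)
    rw [norm_div, Real.norm_of_nonneg (ha.trans_le (hlam k)).le]
    exact div_le_div_of_nonneg_left (norm_nonneg _) ha (hlam k)
  refine le_of_tendsto_of_tendsto (by simpa using hfxy.add hres) hfxw
    (Eventually.of_forall fun k => ?_)
  have hVI := (hf k).mul_sub_le_inner_of_isMinOn (ha.trans_le (hlam k)).le (hymin k) (hy k) hw
  rw [← neg_sub (x k), inner_neg_left] at hVI
  rw [← le_sub_iff_add_le', div_le_iff₀ (ha.trans_le (hlam k))]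
  linarith

lemma norm_sub_sq_le_of_inner_le_zero {t x p : H} (h : ⟪t - x, p - x⟫ ≤ 0) :
    ‖x - p‖ ^ 2 ≤ ‖t - p‖ ^ 2 := by
  have hid := two_mul_inner_sub_sub_eq x t p
  rw [← neg_sub t x, inner_neg_left] at hid
  nlinarith [sq_nonneg ‖t - x‖]

lemma inner_sub_le_zero_of_resolvent {g : H → H → ℝ} {α : ℝ} (hα : 0 < α) {u w r : H}
    (hres : g u w + 1 / α * ⟪w - u, u - r⟫ ≥ 0) (hg : g u w ≤ 0) : ⟪u - w, u - r⟫ ≤ 0 := by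
  have h := nonneg_of_mul_nonneg_right (by linarith : 0 ≤ 1 / α * ⟪w - u, u - r⟫)
    (one_div_pos.2 hα)
  rw [← neg_sub, inner_neg_left]
  linarith

theorem norm_add_smul_adjoint_sub_sq_le {H₁ H₂ : Type*} [NormedAddCommGroup H₁]
    [InnerProductSpace ℝ H₁] [CompleteSpace H₁] [NormedAddCommGroup H₂] [InnerProductSpace ℝ H₂]
    [CompleteSpace H₂] (A : H₁ →L[ℝ] H₂) {μ : ℝ} (hμ0 : 0 ≤ μ) (hμ : μ * ‖A‖ ^ 2 ≤ 1)
    {z p : H₁} {u : H₂} (hu : ⟪u - A p, u - A z⟫ ≤ 0) :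
    ‖z + μ • ContinuousLinearMap.adjoint A (u - A z) - p‖ ^ 2 ≤
      ‖z - p‖ ^ 2 - μ * ‖u - A z‖ ^ 2 := by
  have hinner : ⟪z - p, ContinuousLinearMap.adjoint A (u - A z)⟫ ≤ -‖u - A z‖ ^ 2 := by
    rw [ContinuousLinearMap.adjoint_inner_right, map_sub,
      show A z - A p = (u - A p) - (u - A z) by abel, inner_sub_left, real_inner_self_eq_norm_sq]
    linarith
  set e := u - A z
  have hnorm : ‖ContinuousLinearMap.adjoint A e‖ ≤ ‖A‖ * ‖e‖ := by
    simpa only [LinearIsometryEquiv.norm_map] using (ContinuousLinearMap.adjoint A).le_opNorm e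
  have hsq : ‖ContinuousLinearMap.adjoint A e‖ ^ 2 ≤ ‖A‖ ^ 2 * ‖e‖ ^ 2 := by
    rw [← mul_pow]
    gcongr
  rw [show z + μ • ContinuousLinearMap.adjoint A e - p
      = (z - p) + μ • ContinuousLinearMap.adjoint A e by abel,
    norm_add_sq_real, real_inner_smul_right, norm_smul, Real.norm_of_nonneg hμ0, mul_pow]
  nlinarith [mul_le_mul_of_nonneg_left hsq (sq_nonneg μ),
    mul_le_mul_of_nonneg_left hμ (mul_nonneg hμ0 (sq_nonneg ‖e‖))]

theorem ConvexOn.le_of_weakTendsto [CompleteSpace H] {Q : Set H} {φ : H → ℝ} (hQ : IsClosed Q)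
    (hφ : ConvexOn ℝ Q φ) (hφlsc : LowerSemicontinuousOn φ Q) {u : ℕ → H} {w : H}
    (hu : ∀ k, u k ∈ Q) (huw : WeakTendsto u w) {b : ℕ → ℝ} {r : ℝ}
    (hb : Tendsto b atTop (𝓝 r)) (hle : ∀ᶠ k in atTop, φ (u k) ≤ b k) : φ w ≤ r := by
  refine le_of_forall_pos_le_add fun ε hε => ?_
  obtain ⟨N, hN⟩ := eventually_atTop.1
    (hle.and (hb.eventually (eventually_le_nhds (lt_add_of_pos_right r hε))))
  have hcl : IsClosed {v | v ∈ Q ∧ φ v ≤ r + ε} := by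
    obtain ⟨S, hS, hQS⟩ := lowerSemicontinuousOn_iff_preimage_Iic.1 hφlsc (r + ε)
    have hset : {v | v ∈ Q ∧ φ v ≤ r + ε} = Q ∩ S := hQS
    exact hset ▸ hQ.inter hS
  have hmem := (huw.comp (tendsto_add_atTop_nat N)).mem_of_isClosed_of_convex hcl
    (hφ.convex_le (r + ε)) fun k => ⟨hu _, (hN _ (by omega)).1.trans (hN _ (by omega)).2⟩
  exact hmem.2

theorem le_zero_of_weakTendsto_of_resolvent [CompleteSpace H] {Q : Set H} (hQ : IsClosed Q)
    {g : H → H → ℝ} (hg : ∀ u ∈ Q, ∀ v ∈ Q, g u v + g v u ≤ 0) {v : H} (hv : v ∈ Q)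
    (hgv : ConvexOn ℝ Q (g v)) (hgv_lsc : LowerSemicontinuousOn (g v) Q)
    {α : ℕ → ℝ} {c : ℝ} (hc : 0 < c) (hα : ∀ᶠ k in atTop, c ≤ α k) {u r : ℕ → H} {w : H}
    (hu : ∀ k, u k ∈ Q ∧ ∀ v ∈ Q, g (u k) v + 1 / α k * ⟪v - u k, u k - r k⟫ ≥ 0)
    (hur : Tendsto (fun k => u k - r k) atTop (𝓝 0)) (huw : WeakTendsto u w) : g v w ≤ 0 := by
  have hb : Tendsto (fun k => |⟪v - u k, u k - r k⟫| / c) atTop (𝓝 0) := by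
    simpa using ((huw.const_sub v).tendsto_inner_zero hur).abs.div_const c
  refine hgv.le_of_weakTendsto hQ hgv_lsc (fun k => (hu k).1) huw hb ?_
  filter_upwards [hα] with k hck
  calc g v (u k) ≤ -g (u k) v := by linarith [hg _ (hu k).1 v hv]
    _ ≤ 1 / α k * ⟪v - u k, u k - r k⟫ := by linarith [(hu k).2 v hv]
    _ ≤ 1 / α k * |⟪v - u k, u k - r k⟫| := by
      gcongr
      · exact (one_div_pos.2 (hc.trans_le hck)).le
      · exact le_abs_self _
    _ ≤ |⟪v - u k, u k - r k⟫| / c := by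
      rw [one_div_mul_eq_div]
      exact div_le_div_of_nonneg_left (abs_nonneg _) hc hck

theorem forall_nonneg_of_minty {E : Type*} [AddCommGroup E] [Module ℝ E] {Q : Set E}
    {g : E → E → ℝ} (hg1 : ∀ u ∈ Q, g u u = 0) (hg4 : ∀ u ∈ Q, ConvexOn ℝ Q (g u)) {w : E}
    (hw : w ∈ Q) (h : ∀ v ∈ Q, g v w ≤ 0) {v : E} (hv : v ∈ Q)
    (hg3 : limsup (fun t : ℝ => g (t • v + (1 - t) • w) v) (𝓝[>] 0) ≤ g w v) : 0 ≤ g w v := by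
  have hseg : ∀ t ∈ Ioo (0 : ℝ) 1, 0 ≤ g (t • v + (1 - t) • w) v := by
    rintro t ⟨ht0, ht1⟩
    have hvt : t • v + (1 - t) • w ∈ Q := (hg4 w hw).1 hv hw ht0.le (by linarith) (by ring)
    -- `0 = g vₜ vₜ ≤ t g vₜ v + (1 - t) g vₜ w`, and the last term is `≤ 0`
    have hcvx := (hg4 _ hvt).2 hv hw ht0.le (by linarith : (0 : ℝ) ≤ 1 - t) (by ring)
    rw [hg1 _ hvt, smul_eq_mul, smul_eq_mul] at hcvx
    nlinarith [mul_nonpos_of_nonneg_of_nonpos (by linarith : (0 : ℝ) ≤ 1 - t) (h _ hvt)]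
  have hev : ∀ᶠ t in 𝓝[>] (0 : ℝ), 0 ≤ g (t • v + (1 - t) • w) v :=
    eventually_of_mem (Ioo_mem_nhdsGT one_pos) hseg
  refine le_trans ?_ hg3
  by_cases hbdd : IsBoundedUnder (· ≤ ·) (𝓝[>] (0 : ℝ)) fun t => g (t • v + (1 - t) • w) v
  · exact le_limsup_of_frequently_le hev.frequently hbdd
  · -- an unbounded `limsup` is `0` by convention
    rw [Real.limsup_of_not_isBoundedUnder hbdd]

end InnerProductSpace

theorem weak_convergence_SEP_general
    {H₁ : Type*} [NormedAddCommGroup H₁] [InnerProductSpace ℝ H₁] [CompleteSpace H₁]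
    {H₂ : Type*} [NormedAddCommGroup H₂] [InnerProductSpace ℝ H₂] [CompleteSpace H₂]
    (C : Set H₁) (hCcl : IsClosed C) (hCcv : Convex ℝ C)
    (Q : Set H₂) (hQcl : IsClosed Q) (hQcv : Convex ℝ Q)
    (A : H₁ →L[ℝ] H₂)
    (g : H₂ → H₂ → ℝ)
    (hgA1 : ∀ u ∈ Q, g u u = 0)
    (hgA2 : ∀ u ∈ Q, ∀ v ∈ Q, g u v + g v u ≤ 0)
    (hgA3 : ∀ u ∈ Q, ∀ v ∈ Q, ∀ w ∈ Q,
      limsup (fun lam : ℝ => g (lam • w + (1 - lam) • u) v) (nhdsWithin 0 (Set.Ioi 0)) ≤ g u v)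
    (hgA4 : ∀ u ∈ Q, ConvexOn ℝ Q (g u) ∧ LowerSemicontinuousOn (g u) Q)
    (f : H₁ → H₁ → ℝ) (c₁ c₂ : ℝ) (hc₁ : 0 < c₁) (hc₂ : 0 < c₂)
    (hfB1 : ∀ x ∈ C, f x x = 0)
    (hfB2 : ∀ x ∈ C, ∀ y ∈ C, 0 ≤ f x y → f y x ≤ 0)
    (hfB3 : ∀ (xs ys : ℕ → H₁) (x y : H₁), (∀ k, xs k ∈ C) → (∀ k, ys k ∈ C) →
      x ∈ C → y ∈ C →
      (∀ w : H₁, Tendsto (fun k => (inner ℝ (xs k) w : ℝ)) atTop (nhds (inner ℝ x w))) →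
      (∀ w : H₁, Tendsto (fun k => (inner ℝ (ys k) w : ℝ)) atTop (nhds (inner ℝ y w))) →
      Tendsto (fun k => f (xs k) (ys k)) atTop (nhds (f x y)))
    (hfB4 : ∀ x ∈ C, ConvexOn ℝ C (f x))
    (hfB5 : ∀ x ∈ C, ∀ y ∈ C, ∀ z ∈ C,
      f x y + f y z ≥ f x z - c₁ * ‖x - y‖ ^ 2 - c₂ * ‖y - z‖ ^ 2)
    (a b : ℝ) (ha : 0 < a) (hb : b < min (1 / (2 * c₁)) (1 / (2 * c₂)))
    (lam : ℕ → ℝ) (hlam : ∀ k, lam k ∈ Set.Icc a b)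
    (μ : ℝ) (hμ0 : 0 < μ) (hμ : μ * ‖A‖ ^ 2 < 1)
    (αk : ℕ → ℝ) (hαk : ∀ k, 0 < αk k)
    (hαkinf : ∃ c > 0, ∀ᶠ k in atTop, c ≤ αk k)
    (x y z : ℕ → H₁) (u : ℕ → H₂)
    (hx0 : x 0 ∈ C)
    (hy : ∀ k, y k ∈ C ∧ ∀ w ∈ C,
      lam k * f (x k) (y k) + (1 / 2) * ‖y k - x k‖ ^ 2 ≤
        lam k * f (x k) w + (1 / 2) * ‖w - x k‖ ^ 2)
    (hz : ∀ k, z k ∈ C ∧ ∀ w ∈ C,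
      lam k * f (y k) (z k) + (1 / 2) * ‖z k - x k‖ ^ 2 ≤
        lam k * f (y k) w + (1 / 2) * ‖w - x k‖ ^ 2)
    (hu : ∀ k, u k ∈ Q ∧ ∀ v ∈ Q,
      g (u k) v + (1 / αk k) * (inner ℝ (v - u k) (u k - A (z k)) : ℝ) ≥ 0)
    (hxk : ∀ k, x (k + 1) ∈ C ∧ ∀ w ∈ C,
      (inner ℝ ((z k + μ • (ContinuousLinearMap.adjoint A) (u k - A (z k))) - x (k + 1))
        (w - x (k + 1)) : ℝ) ≤ 0)
    (Ω : Set H₁)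
    (hΩ : Ω = {xs : H₁ | xs ∈ C ∧ (∀ w ∈ C, f xs w ≥ 0) ∧
      A xs ∈ Q ∧ (∀ v ∈ Q, g (A xs) v ≥ 0)})
    (hΩne : Ω.Nonempty) :
    ∃ p ∈ Ω,
      (∀ w : H₁, Tendsto (fun k => (inner ℝ (x k) w : ℝ)) atTop (nhds (inner ℝ p w))) ∧
      (∀ w : H₁, Tendsto (fun k => (inner ℝ (z k) w : ℝ)) atTop (nhds (inner ℝ p w))) ∧
      (∀ w : H₂, Tendsto (fun k => (inner ℝ (u k) w : ℝ)) atTop (nhds (inner ℝ (A p) w))) ∧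
      A p ∈ Q ∧ (∀ v ∈ Q, g (A p) v ≥ 0) := by
  have hxC : ∀ k, x k ∈ C
    | 0 => hx0
    | k + 1 => (hxk k).1
  have hb₁ : 0 < 1 - 2 * b * c₁ := by
    linarith [(lt_div_iff₀ (by positivity)).1 (lt_min_iff.1 hb).1]
  have hb₂ : 0 < 1 - 2 * b * c₂ := by
    linarith [(lt_div_iff₀ (by positivity)).1 (lt_min_iff.1 hb).2]
  have hfejer : ∀ p ∈ Ω, ∀ k, ‖x (k + 1) - p‖ ^ 2 +
      ((1 - 2 * b * c₁) * ‖x k - y k‖ ^ 2 + (1 - 2 * b * c₂) * ‖y k - z k‖ ^ 2 +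
        μ * ‖u k - A (z k)‖ ^ 2) ≤ ‖x k - p‖ ^ 2 := by
    intro p hp k
    obtain ⟨hpC, hpf, hpQ, hpg⟩ := hΩ ▸ hp
    have hEG := norm_sub_sq_le_of_extragradient (c₁ := c₁) (c₂ := c₂)
      (ha.trans_le (hlam k).1).le (hy k).1 (hz k).1 hpC (hfB4 _ (hxC k)) (hfB4 _ (hy k).1)
      (isMinOn_iff.2 (hy k).2) (isMinOn_iff.2 (hz k).2) (hfB2 p hpC _ (hy k).1 (hpf _ (hy k).1))
      (by linarith [hfB5 _ (hxC k) _ (hy k).1 _ (hz k).1])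
    have hres := inner_sub_le_zero_of_resolvent (hαk k) ((hu k).2 _ hpQ)
      (by linarith [hgA2 _ (hu k).1 _ hpQ, hpg _ (hu k).1])
    have hproj := norm_sub_sq_le_of_inner_le_zero ((hxk k).2 p hpC)
    have hstep := norm_add_smul_adjoint_sub_sq_le A hμ0.le hμ.le hres
    nlinarith [mul_le_mul_of_nonneg_right (hlam k).2 hc₁.le,
      mul_le_mul_of_nonneg_right (hlam k).2 hc₂.le, sq_nonneg ‖x k - y k‖, sq_nonneg ‖y k - z k‖]
  have hdist := fun p hp => tendsto_of_add_le (a := fun k => ‖x k - p‖ ^ 2)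
    (fun k => sq_nonneg _) (fun k => by positivity) (hfejer p hp)
  obtain ⟨p₀, hp₀⟩ := hΩne
  have hd := (hdist p₀ hp₀).2
  have hxy : Tendsto (fun k => x k - y k) atTop (𝓝 0) := tendsto_zero_of_mul_norm_sq_le hb₁
    (fun k => by nlinarith [sq_nonneg ‖y k - z k‖, sq_nonneg ‖u k - A (z k)‖]) hd
  have hyz : Tendsto (fun k => y k - z k) atTop (𝓝 0) := tendsto_zero_of_mul_norm_sq_le hb₂
    (fun k => by nlinarith [sq_nonneg ‖x k - y k‖, sq_nonneg ‖u k - A (z k)‖]) hd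
  have he : Tendsto (fun k => u k - A (z k)) atTop (𝓝 0) := tendsto_zero_of_mul_norm_sq_le hμ0
    (fun k => by nlinarith [sq_nonneg ‖x k - y k‖, sq_nonneg ‖y k - z k‖]) hd
  have hxz : Tendsto (fun k => x k - z k) atTop (𝓝 0) := by simpa using hxy.add hyz
  have hAe : Tendsto (fun k => A (z k) - u k) atTop (𝓝 0) := by simpa using he.neg
  obtain ⟨c, hc, hcα⟩ := hαkinf
  have hcluster : ∀ φ : ℕ → ℕ, Tendsto φ atTop atTop → ∀ q, WeakTendsto (x ∘ φ) q → q ∈ Ω := by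
    intro φ hφ q hq
    have hqC := hq.mem_of_isClosed_of_convex hCcl hCcv fun k => hxC _
    have hyq := hq.of_tendsto_sub (hxy.comp hφ)
    have huq : WeakTendsto (u ∘ φ) (A q) :=
      ((hq.of_tendsto_sub (hxz.comp hφ)).map A).of_tendsto_sub (hAe.comp hφ)
    have hAq := huq.mem_of_isClosed_of_convex hQcl hQcv fun k => (hu _).1
    have hgAq : ∀ v ∈ Q, g v (A q) ≤ 0 := fun v hv =>
      le_zero_of_weakTendsto_of_resolvent hQcl hgA2 hv (hgA4 v hv).1 (hgA4 v hv).2 hc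
        (hφ.eventually hcα) (fun k => hu (φ k)) (he.comp hφ) huq
    have hfq : ∀ w ∈ C, 0 ≤ f q w := fun w hw =>
      nonneg_of_weakTendsto_of_isMinOn ha (fun k => (hlam _).1) (fun k => hfB4 _ (hxC _))
        (fun k => isMinOn_iff.2 (hy _).2) (fun k => (hy _).1) hw hyq (hxy.comp hφ)
        (by simpa [hfB1 q hqC] using
          hfB3 _ _ q q (fun k => hxC _) (fun k => (hy _).1) hqC hqC hq hyq)
        (hfB3 _ _ q w (fun k => hxC _) (fun _ => hw) hqC hw hq fun _ => tendsto_const_nhds)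
    rw [hΩ]
    exact ⟨hqC, hfq, hAq, fun v hv => forall_nonneg_of_minty hgA1 (fun u hu => (hgA4 u hu).1)
      hAq hgAq hv (hgA3 _ hAq v hv v hv)⟩
  obtain ⟨p, hpΩ, hxp⟩ :=
    exists_weakTendsto_of_tendsto_norm_sub_sq ⟨p₀, hp₀⟩ (fun p hp => (hdist p hp).1) hcluster
  have hzp := hxp.of_tendsto_sub hxz
  exact ⟨p, hpΩ, hxp, hzp, (hzp.map A).of_tendsto_sub hAe, (hΩ ▸ hpΩ).2.2⟩

/-- Weak convergence theorem for the extragradient algorithm for the split equilibrium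
problem (SEP), the special case `S = I`, `T = I` of the SEPNM algorithm. -/
theorem weak_convergence_SEP
    {H₁ : Type*} [NormedAddCommGroup H₁] [InnerProductSpace ℝ H₁] [CompleteSpace H₁]
    {H₂ : Type*} [NormedAddCommGroup H₂] [InnerProductSpace ℝ H₂] [CompleteSpace H₂]
    (C : Set H₁) (hCne : C.Nonempty) (hCcl : IsClosed C) (hCcv : Convex ℝ C)
    (Q : Set H₂) (hQne : Q.Nonempty) (hQcl : IsClosed Q) (hQcv : Convex ℝ Q)
    (A : H₁ →L[ℝ] H₂)
    (g : H₂ → H₂ → ℝ)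
    (hgA1 : ∀ u ∈ Q, g u u = 0)
    (hgA2 : ∀ u ∈ Q, ∀ v ∈ Q, g u v + g v u ≤ 0)
    (hgA3 : ∀ u ∈ Q, ∀ v ∈ Q, ∀ w ∈ Q,
      limsup (fun lam : ℝ => g (lam • w + (1 - lam) • u) v) (nhdsWithin 0 (Set.Ioi 0)) ≤ g u v)
    (hgA4 : ∀ u ∈ Q, ConvexOn ℝ Q (g u) ∧ LowerSemicontinuousOn (g u) Q)
    (f : H₁ → H₁ → ℝ) (c₁ c₂ : ℝ) (hc₁ : 0 < c₁) (hc₂ : 0 < c₂)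
    (hfB1 : ∀ x ∈ C, f x x = 0)
    (hfB2 : ∀ x ∈ C, ∀ y ∈ C, 0 ≤ f x y → f y x ≤ 0)
    (hfB3 : ∀ (xs ys : ℕ → H₁) (x y : H₁), (∀ k, xs k ∈ C) → (∀ k, ys k ∈ C) →
      x ∈ C → y ∈ C →
      (∀ w : H₁, Tendsto (fun k => (inner ℝ (xs k) w : ℝ)) atTop (nhds (inner ℝ x w))) →
      (∀ w : H₁, Tendsto (fun k => (inner ℝ (ys k) w : ℝ)) atTop (nhds (inner ℝ y w))) →
      Tendsto (fun k => f (xs k) (ys k)) atTop (nhds (f x y)))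
    (hfB4 : ∀ x ∈ C, ConvexOn ℝ C (f x))
    (hfB5 : ∀ x ∈ C, ∀ y ∈ C, ∀ z ∈ C,
      f x y + f y z ≥ f x z - c₁ * ‖x - y‖ ^ 2 - c₂ * ‖y - z‖ ^ 2)
    (a b : ℝ) (ha : 0 < a) (hab : a ≤ b) (hb : b < min (1 / (2 * c₁)) (1 / (2 * c₂)))
    (lam : ℕ → ℝ) (hlam : ∀ k, lam k ∈ Set.Icc a b)
    (μ : ℝ) (hμ0 : 0 < μ) (hμ : μ * ‖A‖ ^ 2 < 1)
    (αk : ℕ → ℝ) (hαk : ∀ k, 0 < αk k)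
    (hαkinf : ∃ c > 0, ∀ᶠ k in atTop, c ≤ αk k)
    (x y z : ℕ → H₁) (u : ℕ → H₂)
    (hx0 : x 0 ∈ C)
    (hy : ∀ k, y k ∈ C ∧ ∀ w ∈ C,
      lam k * f (x k) (y k) + (1 / 2) * ‖y k - x k‖ ^ 2 ≤
        lam k * f (x k) w + (1 / 2) * ‖w - x k‖ ^ 2)
    (hz : ∀ k, z k ∈ C ∧ ∀ w ∈ C,
      lam k * f (y k) (z k) + (1 / 2) * ‖z k - x k‖ ^ 2 ≤
        lam k * f (y k) w + (1 / 2) * ‖w - x k‖ ^ 2)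
    (hu : ∀ k, u k ∈ Q ∧ ∀ v ∈ Q,
      g (u k) v + (1 / αk k) * (inner ℝ (v - u k) (u k - A (z k)) : ℝ) ≥ 0)
    (hxk : ∀ k, x (k + 1) ∈ C ∧ ∀ w ∈ C,
      (inner ℝ ((z k + μ • (ContinuousLinearMap.adjoint A) (u k - A (z k))) - x (k + 1))
        (w - x (k + 1)) : ℝ) ≤ 0)
    (Ω : Set H₁)
    (hΩ : Ω = {xs : H₁ | xs ∈ C ∧ (∀ w ∈ C, f xs w ≥ 0) ∧
      A xs ∈ Q ∧ (∀ v ∈ Q, g (A xs) v ≥ 0)})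
    (hΩne : Ω.Nonempty) :
    ∃ p ∈ Ω,
      (∀ w : H₁, Tendsto (fun k => (inner ℝ (x k) w : ℝ)) atTop (nhds (inner ℝ p w))) ∧
      (∀ w : H₁, Tendsto (fun k => (inner ℝ (z k) w : ℝ)) atTop (nhds (inner ℝ p w))) ∧
      (∀ w : H₂, Tendsto (fun k => (inner ℝ (u k) w : ℝ)) atTop (nhds (inner ℝ (A p) w))) ∧
      A p ∈ Q ∧ (∀ v ∈ Q, g (A p) v ≥ 0) :=
  weak_convergence_SEP_general C hCcl hCcv Q hQcl hQcv A g hgA1 hgA2 hgA3 hgA4 f c₁ c₂ hc₁ hc₂ hfB1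
    hfB2 hfB3 hfB4 hfB5 a b ha hb lam hlam μ hμ0 hμ αk hαk hαkinf x y z u hx0 hy hz hu hxk Ω hΩ hΩne
end

section
/- (Strong convergence theorem.) Let H₁, H₂ be real Hilbert spaces, C ⊆ H₁ and Q ⊆ H₂ nonempty closed convex sets, S : C → C and T : Q → Q nonexpansive mappings, A : H₁ → H₂ a bounded linear operator with adjoint A*, g : Q × Q → ℝ satisfying Assumptions A, and f : C × C → ℝ satisfying Assumptions B with constants c₁, c₂ > 0. Let x¹ ∈ C₁ = C, let 0 < a ≤ b < min{1/(2c₁), 1/(2c₂)} and {λ_k} ⊆ [a, b], let 0 < α < 1, let μ > 0 with μ‖A‖² < 1, and let {α_k} ⊆ (0, ∞) with liminf_{k→∞} α_k > 0. Suppose the sequences {x^k}, {y^k}, {z^k}, {t^k}, {u^k}, {s^k} and sets {C_k} satisfy, for every k ≥ 1: y^k ∈ C minimizes y ↦ λ_k f(x^k, y) + (1/2)‖y − x^k‖² over C; z^k ∈ C minimizes y ↦ λ_k f(y^k, y) + (1/2)‖y − x^k‖² over C; t^k = (1 − α)z^k + α S(z^k); u^k ∈ Q satisfies g(u^k, v)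 + (1/α_k)⟨v − u^k, u^k − A t^k⟩ ≥ 0 for all v ∈ Q; s^k = P_C(t^k + μ A*(T(u^k) − A t^k)); C_{k+1} = {r ∈ C_k : ‖s^k − r‖ ≤ ‖t^k − r‖ ≤ ‖x^k − r‖}; and x^{k+1} = P_{C_{k+1}}(x¹). If Ω = {x* ∈ C : f(x*, y) ≥ 0 for all y ∈ C, S(x*) = x*, A x* ∈ Q, g(A x*, v) ≥ 0 for all v ∈ Q, and T(A x*) = A x*} is nonempty, then each C_k is a nonempty closed convex set containing Ω, the iterates are well defined, and there exists p ∈ Ω such that {x^k} and {z^k} converge strongly to p and {u^k} converges strongly to A p, with A p ∈ Sol(Q, g) ∩ Fix(T). -/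
/-!
Each point `r ∈ Ω` is Fejér-related to one iteration: the extragradient step gives
`‖z - r‖² ≤ ‖x - r‖² - (1 - 2λc₁)‖x - y‖² - (1 - 2λc₂)‖y - z‖²`, and neither the Mann step with `S`
nor the projected split step through the resolvent of `g` and through `T` increases the distance
to `r`. Hence `Ω` lies in every `Cs k`, an intersection of `C` with half-spaces, and `x (k + 1)`,
the projection of `x 0` onto the decreasing sets `Cs (k + 1)`, is Cauchy by the Pythagorean
inequality for projections. Its limit `p` lies in every `Cs k`, which forces `t k, s k → p`, and
the Fejér estimates at one point of `Ω` then make the residuals `x - y`, `y - z`, `T u - A t` and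
`u - A t` vanish. The limit `p` is in `Ω` by the weak continuity of `f`, the continuity of the
nonexpansive maps, and, for `A p ∈ Sol(Q, g)`, lower semicontinuity of `g` followed by Minty's
lemma.
-/

open Filter Topology
open scoped InnerProductSpace

lemma LowerSemicontinuousWithinAt.le_of_tendsto {X : Type*} [TopologicalSpace X] {φ : X → ℝ}
    {s : Set X} {w : X} (hφ : LowerSemicontinuousWithinAt φ s w) {u : ℕ → X}
    (hus : ∀ k, u k ∈ s) (hu : Tendsto u atTop (𝓝 w)) {e : ℕ → ℝ} {L : ℝ}
    (he : Tendsto e atTop (𝓝 L)) (hle : ∀ᶠ k in atTop, φ (u k) ≤ e k) : φ w ≤ L := by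
  by_contra! hlt
  obtain ⟨c, hLc, hcφ⟩ := exists_between hlt
  have hu' : Tendsto u atTop (𝓝[s] w) := tendsto_nhdsWithin_iff.2 ⟨hu, .of_forall hus⟩
  obtain ⟨k, hk₁, hk₂, hk₃⟩ :=
    ((hu'.eventually (hφ c hcφ)).and ((he.eventually_lt_const hLc).and hle)).exists
  linarith

namespace SplitEquilibrium

section Normed

variable {E : Type*} [NormedAddCommGroup E]

lemma tendsto_of_norm_sub_le {f g : ℕ → E} {a b : E} (hg : Tendsto g atTop (𝓝 b))
    (h : ∀ k, ‖f k - a‖ ≤ ‖g k - b‖) : Tendsto f atTop (𝓝 a) :=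
  tendsto_iff_norm_sub_tendsto_zero.2 <|
    squeeze_zero (fun _ => norm_nonneg _) h (tendsto_iff_norm_sub_tendsto_zero.1 hg)

lemma tendsto_zero_of_mul_norm_sq_le_sq_sub_sq {e : ℕ → E} {X Z : ℕ → ℝ} {κ L : ℝ}
    (hκ : 0 < κ) (h : ∀ k, κ * ‖e k‖ ^ 2 ≤ X k ^ 2 - Z k ^ 2)
    (hX : Tendsto X atTop (𝓝 L)) (hZ : Tendsto Z atTop (𝓝 L)) : Tendsto e atTop (𝓝 0) := by
  have hbound : Tendsto (fun k => (X k ^ 2 - Z k ^ 2) / κ) atTop (𝓝 0) := by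
    simpa using ((hX.pow 2).sub (hZ.pow 2)).div_const κ
  have hsq : Tendsto (fun k => ‖e k‖ ^ 2) atTop (𝓝 0) :=
    squeeze_zero (fun _ => sq_nonneg _) (fun k => (le_div_iff₀' hκ).2 (h k)) hbound
  rw [tendsto_zero_iff_norm_tendsto_zero]
  simpa [Real.sqrt_sq (norm_nonneg _)] using hsq.sqrt

lemma eq_of_tendsto_of_nonexpansive {K : Set E} {S : E → E}
    (hS : ∀ x ∈ K, ∀ y ∈ K, ‖S x - S y‖ ≤ ‖x - y‖) {xs : ℕ → E} {p : E}
    (hxs : ∀ k, xs k ∈ K) (hp : p ∈ K) (hx : Tendsto xs atTop (𝓝 p))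
    (hSx : Tendsto (fun k => S (xs k)) atTop (𝓝 p)) : S p = p :=
  tendsto_nhds_unique (tendsto_of_norm_sub_le hx fun k => hS _ (hxs k) _ hp) hSx

lemma isClosed_setOf_norm_sub_le (a b : E) : IsClosed {r : E | ‖a - r‖ ≤ ‖b - r‖} :=
  isClosed_le (by fun_prop) (by fun_prop)

lemma antitone_of_shrinking {Cs : ℕ → Set E} {s t x : ℕ → E}
    (hCsrec : ∀ k, Cs (k + 1) = {r ∈ Cs k | ‖s k - r‖ ≤ ‖t k - r‖ ∧ ‖t k - r‖ ≤ ‖x k - r‖}) :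
    Antitone Cs :=
  antitone_nat_of_succ_le fun k => hCsrec k ▸ Set.sep_subset _ _

lemma subset_shrinking_of_fejer {C Ω : Set E} {Cs : ℕ → Set E} {s t x : ℕ → E} (hCs0 : Cs 0 = C)
    (hCsrec : ∀ k, Cs (k + 1) = {r ∈ Cs k | ‖s k - r‖ ≤ ‖t k - r‖ ∧ ‖t k - r‖ ≤ ‖x k - r‖})
    (hΩC : Ω ⊆ C) (hfejer : ∀ r ∈ Ω, ∀ k, ‖s k - r‖ ≤ ‖t k - r‖ ∧ ‖t k - r‖ ≤ ‖x k - r‖)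
    (k : ℕ) : Ω ⊆ Cs k := by
  induction k with
  | zero => exact hCs0 ▸ hΩC
  | succ k ih => rw [hCsrec k]; exact fun r hr => ⟨ih hr, hfejer r hr k⟩

lemma tendsto_extragradient_of_fejer {x y z t : ℕ → E} {p q : E} {κ₁ κ₂ : ℝ}
    (hκ₁ : 0 < κ₁) (hκ₂ : 0 < κ₂)
    (hfejer : ∀ k, κ₁ * ‖x k - y k‖ ^ 2 + κ₂ * ‖y k - z k‖ ^ 2 ≤ ‖x k - q‖ ^ 2 - ‖z k - q‖ ^ 2 ∧
      ‖t k - q‖ ≤ ‖z k - q‖ ∧ ‖z k - q‖ ≤ ‖x k - q‖)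
    (hxp : Tendsto x atTop (𝓝 p)) (htp : Tendsto t atTop (𝓝 p)) :
    Tendsto y atTop (𝓝 p) ∧ Tendsto z atTop (𝓝 p) := by
  have hzq : Tendsto (fun k => ‖z k - q‖) atTop (𝓝 ‖p - q‖) :=
    tendsto_of_tendsto_of_tendsto_of_le_of_le (htp.sub_const q).norm (hxp.sub_const q).norm
      (fun k => (hfejer k).2.1) fun k => (hfejer k).2.2
  have hxy := tendsto_zero_of_mul_norm_sq_le_sq_sub_sq (e := fun k => x k - y k) hκ₁
    (fun k => by nlinarith [(hfejer k).1, mul_nonneg hκ₂.le (sq_nonneg ‖y k - z k‖)])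
    (hxp.sub_const q).norm hzq
  have hyz := tendsto_zero_of_mul_norm_sq_le_sq_sub_sq (e := fun k => y k - z k) hκ₂
    (fun k => by nlinarith [(hfejer k).1, mul_nonneg hκ₁.le (sq_nonneg ‖x k - y k‖)])
    (hxp.sub_const q).norm hzq
  have hyp : Tendsto y atTop (𝓝 p) := by simpa using hxp.sub hxy
  exact ⟨hyp, by simpa using hyp.sub hyz⟩

lemma tendsto_split_residuals {F : Type*} [NormedAddCommGroup F] {t s : ℕ → E} {a u v : ℕ → F}
    {p r : E} {w q : F} {κ : ℝ} (hκ : 0 < κ)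
    (hu : ∀ k, ‖u k - q‖ ^ 2 + ‖u k - a k‖ ^ 2 ≤ ‖a k - q‖ ^ 2)
    (hv : ∀ k, ‖v k - q‖ ≤ ‖u k - q‖) (hs : ∀ k, ‖s k - r‖ ^ 2 + κ * ‖v k - a k‖ ^ 2 ≤ ‖t k - r‖ ^ 2)
    (htp : Tendsto t atTop (𝓝 p)) (hsp : Tendsto s atTop (𝓝 p)) (ha : Tendsto a atTop (𝓝 w)) :
    Tendsto (fun k => v k - a k) atTop (𝓝 0) ∧ Tendsto (fun k => u k - a k) atTop (𝓝 0) := by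
  have hva := tendsto_zero_of_mul_norm_sq_le_sq_sub_sq (e := fun k => v k - a k) hκ
    (fun k => by linarith [hs k]) (htp.sub_const r).norm (hsp.sub_const r).norm
  have hvw : Tendsto v atTop (𝓝 w) := by simpa using hva.add ha
  have hua : ∀ k, ‖u k - q‖ ≤ ‖a k - q‖ := fun k =>
    (sq_le_sq₀ (norm_nonneg _) (norm_nonneg _)).1 <| by nlinarith [hu k, sq_nonneg ‖u k - a k‖]
  have huq : Tendsto (fun k => ‖u k - q‖) atTop (𝓝 ‖w - q‖) :=
    tendsto_of_tendsto_of_tendsto_of_le_of_le (hvw.sub_const q).norm (ha.sub_const q).norm hv hua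
  exact ⟨hva, tendsto_zero_of_mul_norm_sq_le_sq_sub_sq (e := fun k => u k - a k) one_pos
    (fun k => by linarith [hu k]) (ha.sub_const q).norm huq⟩

variable [NormedSpace ℝ E]

lemma norm_convexComb_sub_le {S : E → E} {z r : E} (hSz : ‖S z - r‖ ≤ ‖z - r‖) {α : ℝ}
    (hα0 : 0 ≤ α) (hα1 : α ≤ 1) : ‖((1 - α) • z + α • S z) - r‖ ≤ ‖z - r‖ := by
  have hz : z ∈ Metric.closedBall r ‖z - r‖ := by simp [dist_eq_norm]
  have hSz' : S z ∈ Metric.closedBall r ‖z - r‖ := by simpa [dist_eq_norm] using hSz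
  simpa [dist_eq_norm] using
    convex_closedBall r ‖z - r‖ hz hSz' (by linarith) hα0 (by ring)

lemma eq_of_tendsto_mann {K : Set E} {S : E → E}
    (hS : ∀ x ∈ K, ∀ y ∈ K, ‖S x - S y‖ ≤ ‖x - y‖) {α : ℝ} (hα : α ≠ 0) {z t : ℕ → E} {p : E}
    (hz : ∀ k, z k ∈ K) (hp : p ∈ K) (ht : ∀ k, t k = (1 - α) • z k + α • S (z k))
    (hzp : Tendsto z atTop (𝓝 p)) (htp : Tendsto t atTop (𝓝 p)) : S p = p := by
  have hS_eq : ∀ k, S (z k) = α⁻¹ • (t k - (1 - α) • z k) := fun k => by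
    rw [ht k, add_sub_cancel_left, smul_smul, inv_mul_cancel₀ hα, one_smul]
  have hlim : α⁻¹ • (p - (1 - α) • p) = p := by
    rw [show p - (1 - α) • p = α • p by module, smul_smul, inv_mul_cancel₀ hα, one_smul]
  refine eq_of_tendsto_of_nonexpansive hS hz hp hzp ?_
  simpa only [hS_eq, hlim] using (htp.sub (hzp.const_smul (1 - α))).const_smul α⁻¹

end Normed

section Hilbert

variable {H : Type*} [NormedAddCommGroup H] [InnerProductSpace ℝ H]

lemma norm_sq_add_norm_sq_le_of_inner_nonpos {a b : H} (h : ⟪a, b⟫_ℝ ≤ 0) :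
    ‖a‖ ^ 2 + ‖b‖ ^ 2 ≤ ‖a - b‖ ^ 2 := by
  rw [norm_sub_sq_real]; linarith

lemma convex_setOf_norm_sub_le (a b : H) : Convex ℝ {r : H | ‖a - r‖ ≤ ‖b - r‖} := by
  have h : ∀ r : H, ‖a - r‖ ≤ ‖b - r‖ ↔ ⟪b - a, r⟫_ℝ ≤ (‖b‖ ^ 2 - ‖a‖ ^ 2) / 2 := fun r => by
    rw [← sq_le_sq₀ (norm_nonneg _) (norm_nonneg _), norm_sub_sq_real, norm_sub_sq_real,
      inner_sub_left]
    constructor <;> intro <;> linarith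
  simp_rw [h]
  exact convex_halfSpace_le (innerₛₗ ℝ (b - a)).isLinear _

lemma isClosed_convex_of_shrinking {C : Set H} (hCcl : IsClosed C) (hCcv : Convex ℝ C)
    {Cs : ℕ → Set H} {s t x : ℕ → H} (hCs0 : Cs 0 = C)
    (hCsrec : ∀ k, Cs (k + 1) = {r ∈ Cs k | ‖s k - r‖ ≤ ‖t k - r‖ ∧ ‖t k - r‖ ≤ ‖x k - r‖})
    (k : ℕ) : IsClosed (Cs k) ∧ Convex ℝ (Cs k) := by
  induction k with
  | zero => exact hCs0 ▸ ⟨hCcl, hCcv⟩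
  | succ k ih =>
    rw [hCsrec k]
    exact ⟨ih.1.inter ((isClosed_setOf_norm_sub_le _ _).inter (isClosed_setOf_norm_sub_le _ _)),
      ih.2.inter ((convex_setOf_norm_sub_le _ _).inter (convex_setOf_norm_sub_le _ _))⟩

/-- `hproj` says that `x (k + 1)` is the metric projection of `x 0` onto `K (k + 1)`. -/
theorem exists_tendsto_of_shrinking_projection [CompleteSpace H] {K : ℕ → Set H}
    (hK : Antitone K) (hKcl : ∀ k, IsClosed (K k)) {x : ℕ → H} (hxK : ∀ k, x k ∈ K k)
    (hproj : ∀ k, ∀ w ∈ K (k + 1), ⟪x 0 - x (k + 1), w - x (k + 1)⟫_ℝ ≤ 0)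
    {q : H} (hq : ∀ k, q ∈ K k) : ∃ p, (∀ k, p ∈ K k) ∧ Tendsto x atTop (𝓝 p) := by
  have hpyth : ∀ k, ∀ w ∈ K k, ‖x 0 - x k‖ ^ 2 + ‖w - x k‖ ^ 2 ≤ ‖x 0 - w‖ ^ 2 := by
    rintro (_ | k) w hw
    · simp [norm_sub_rev]
    · simpa using norm_sq_add_norm_sq_le_of_inner_nonpos (hproj k w hw)
  set d : ℕ → ℝ := fun k => ‖x 0 - x k‖ ^ 2
  have hd_le : ∀ {n m}, n ≤ m → d n + ‖x m - x n‖ ^ 2 ≤ d m := fun hnm =>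
    hpyth _ _ (hK hnm (hxK _))
  have hd_mono : Monotone d := fun n m hnm => by nlinarith [hd_le hnm, sq_nonneg ‖x m - x n‖]
  have hd_bdd : ∀ k, d k ≤ ‖x 0 - q‖ ^ 2 := fun k => by
    nlinarith [hpyth k q (hq k), sq_nonneg ‖q - x k‖]
  have hd_cauchy : CauchySeq d :=
    (tendsto_atTop_ciSup hd_mono ⟨_, Set.forall_mem_range.2 hd_bdd⟩).cauchySeq
  have hx_cauchy : CauchySeq x := by
    refine Metric.cauchySeq_iff'.2 fun ε hε => ?_
    obtain ⟨N, hN⟩ := Metric.cauchySeq_iff'.1 hd_cauchy (ε ^ 2) (by positivity)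
    refine ⟨N, fun n hn => ?_⟩
    have h := hd_le hn
    have := (abs_lt.1 (Real.dist_eq _ _ ▸ hN n hn)).2
    rw [dist_eq_norm, ← sq_lt_sq₀ (norm_nonneg _) hε.le]
    linarith
  obtain ⟨p, hp⟩ := cauchySeq_tendsto_of_complete hx_cauchy
  refine ⟨p, fun k => (hKcl k).mem_of_tendsto hp ?_, hp⟩
  filter_upwards [eventually_ge_atTop k] with m hm using hK hm (hxK m)

theorem shrinking_projection_method [CompleteSpace H] {C Ω : Set H} (hCcl : IsClosed C)
    (hCcv : Convex ℝ C) {Cs : ℕ → Set H} {s t x : ℕ → H} (hCs0 : Cs 0 = C)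
    (hCsrec : ∀ k, Cs (k + 1) = {r ∈ Cs k | ‖s k - r‖ ≤ ‖t k - r‖ ∧ ‖t k - r‖ ≤ ‖x k - r‖})
    (hx0 : x 0 ∈ C)
    (hxk : ∀ k, x (k + 1) ∈ Cs (k + 1) ∧ ∀ w ∈ Cs (k + 1), ⟪x 0 - x (k + 1), w - x (k + 1)⟫_ℝ ≤ 0)
    (hΩC : Ω ⊆ C) (hΩne : Ω.Nonempty)
    (hfejer : ∀ r ∈ Ω, ∀ k, ‖s k - r‖ ≤ ‖t k - r‖ ∧ ‖t k - r‖ ≤ ‖x k - r‖) :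
    (∀ k, (Cs k).Nonempty ∧ IsClosed (Cs k) ∧ Convex ℝ (Cs k) ∧ Ω ⊆ Cs k) ∧
      ∃ p ∈ C, Tendsto x atTop (𝓝 p) ∧ Tendsto t atTop (𝓝 p) ∧ Tendsto s atTop (𝓝 p) := by
  obtain ⟨q, hq⟩ := hΩne
  have hΩCs := subset_shrinking_of_fejer hCs0 hCsrec hΩC hfejer
  have hCs := isClosed_convex_of_shrinking hCcl hCcv hCs0 hCsrec
  have hxCs : ∀ k, x k ∈ Cs k := by rintro (_ | k); exacts [hCs0 ▸ hx0, (hxk k).1]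
  obtain ⟨p, hpCs, hxp⟩ := exists_tendsto_of_shrinking_projection (antitone_of_shrinking hCsrec)
    (fun k => (hCs k).1) hxCs (fun k => (hxk k).2) (hΩCs · hq)
  have hp_cut : ∀ k, ‖s k - p‖ ≤ ‖t k - p‖ ∧ ‖t k - p‖ ≤ ‖x k - p‖ := fun k =>
    (hCsrec k ▸ hpCs (k + 1)).2
  have htp := tendsto_of_norm_sub_le hxp fun k => (hp_cut k).2
  refine ⟨fun k => ⟨⟨q, hΩCs k hq⟩, (hCs k).1, (hCs k).2, hΩCs k⟩, p, hCs0 ▸ hpCs 0, hxp, htp,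
    tendsto_of_norm_sub_le htp fun k => (hp_cut k).1⟩

def IsProx (C : Set H) (F : H → ℝ) (lam : ℝ) (x y : H) : Prop :=
  y ∈ C ∧ ∀ w ∈ C, lam * F y + 1 / 2 * ‖y - x‖ ^ 2 ≤ lam * F w + 1 / 2 * ‖w - x‖ ^ 2

def IsResolvent (Q : Set H) (g : H → H → ℝ) (β : ℝ) (x u : H) : Prop :=
  u ∈ Q ∧ ∀ v ∈ Q, g u v + 1 / β * ⟪v - u, u - x⟫_ℝ ≥ 0

lemma IsProx.inner_sub_le {C : Set H} {F : H → ℝ} (hF : ConvexOn ℝ C F) {lam : ℝ}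
    (hlam : 0 ≤ lam) {x y : H} (hy : IsProx C F lam x y) {w : H} (hw : w ∈ C) :
    ⟪x - y, w - y⟫_ℝ ≤ lam * (F w - F y) := by
  obtain ⟨hy, hmin⟩ := hy
  set D := lam * (F y - F w) + ⟪x - y, w - y⟫_ℝ
  have hD : ∀ τ ∈ Set.Ioc (0 : ℝ) 1, D ≤ τ * (‖w - y‖ ^ 2 / 2) := by
    rintro τ ⟨hτ0, hτ1⟩
    have hmem : τ • w + (1 - τ) • y ∈ C := hF.1 hw hy hτ0.le (by linarith) (by ring)
    have hconv : F (τ • w + (1 - τ) • y) ≤ τ * F w + (1 - τ) * F y :=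
      hF.2 hw hy hτ0.le (by linarith) (by ring)
    have hexp : ‖τ • w + (1 - τ) • y - x‖ ^ 2
        = ‖y - x‖ ^ 2 - 2 * τ * ⟪x - y, w - y⟫_ℝ + τ ^ 2 * ‖w - y‖ ^ 2 := by
      rw [show τ • w + (1 - τ) • y - x = (y - x) + τ • (w - y) by module, norm_add_sq_real,
        real_inner_smul_right, norm_smul, Real.norm_of_nonneg hτ0.le, ← neg_sub x y,
        inner_neg_left]
      ring
    have h := hmin _ hmem
    rw [hexp] at h
    have hlc := mul_le_mul_of_nonneg_left hconv hlam
    have : τ * D ≤ τ * (τ * (‖w - y‖ ^ 2 / 2)) := by nlinarith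
    exact le_of_mul_le_mul_left this hτ0
  have hlim : Tendsto (fun τ : ℝ => τ * (‖w - y‖ ^ 2 / 2)) (𝓝[>] 0) (𝓝 0) := by
    simpa using ((tendsto_id (x := 𝓝 (0 : ℝ))).mul_const _).mono_left nhdsWithin_le_nhds
  have hD0 : D ≤ 0 := ge_of_tendsto hlim <| by
    filter_upwards [Ioc_mem_nhdsGT one_pos] with τ hτ using hD τ hτ
  linarith

lemma IsProx.extragradient_estimate {C : Set H} {f : H → H → ℝ} {c₁ c₂ lam : ℝ} (hlam : 0 ≤ lam)
    {x y z r : H} (hfx : ConvexOn ℝ C (f x)) (hfy : ConvexOn ℝ C (f y))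
    (hlip : f x y + f y z ≥ f x z - c₁ * ‖x - y‖ ^ 2 - c₂ * ‖y - z‖ ^ 2)
    (hr : r ∈ C) (hfyr : f y r ≤ 0) (hy : IsProx C (f x) lam x y) (hz : IsProx C (f y) lam x z) :
    ‖z - r‖ ^ 2 ≤
      ‖x - r‖ ^ 2 - (1 - 2 * lam * c₁) * ‖x - y‖ ^ 2 - (1 - 2 * lam * c₂) * ‖y - z‖ ^ 2 := by
  have hvi₁ := hy.inner_sub_le hfx hlam hz.1
  have hvi₂ := hz.inner_sub_le hfy hlam hr
  have hxr := norm_sub_sq_real (x - z) (r - z)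
  have hxz := norm_sub_sq_real (x - y) (z - y)
  rw [sub_sub_sub_cancel_right] at hxr hxz
  rw [norm_sub_rev r z] at hxr
  rw [norm_sub_rev z y] at hxz
  have hlip' := mul_le_mul_of_nonneg_left hlip hlam
  nlinarith [mul_nonpos_of_nonneg_of_nonpos hlam hfyr]

lemma IsResolvent.norm_sq_add_norm_sq_le {Q : Set H} {g : H → H → ℝ} {β : ℝ} (hβ : 0 < β)
    {x u w : H} (hu : IsResolvent Q g β x u) (hw : w ∈ Q) (hguw : g u w ≤ 0) :
    ‖u - w‖ ^ 2 + ‖u - x‖ ^ 2 ≤ ‖x - w‖ ^ 2 := by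
  have h := hu.2 w hw
  have hinner : 0 ≤ ⟪w - u, u - x⟫_ℝ := by
    by_contra hneg
    have := mul_neg_of_pos_of_neg (one_div_pos.2 hβ) (not_le.1 hneg)
    linarith
  have := norm_sq_add_norm_sq_le_of_inner_nonpos (a := u - w) (b := u - x)
    (by rw [← neg_sub w u, inner_neg_left]; linarith)
  rwa [sub_sub_sub_cancel_left] at this

lemma extragradient_mann_fejer {C : Set H} {f : H → H → ℝ} {S : H → H} {c₁ c₂ b α : ℝ}
    {lam : ℕ → ℝ} {x y z t : ℕ → H} (hc₁ : 0 ≤ c₁) (hc₂ : 0 ≤ c₂)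
    (hbc₁ : 2 * b * c₁ ≤ 1) (hbc₂ : 2 * b * c₂ ≤ 1)
    (hf_pm : ∀ x ∈ C, ∀ y ∈ C, 0 ≤ f x y → f y x ≤ 0) (hf_convex : ∀ x ∈ C, ConvexOn ℝ C (f x))
    (hf_lip : ∀ x ∈ C, ∀ y ∈ C, ∀ z ∈ C,
      f x y + f y z ≥ f x z - c₁ * ‖x - y‖ ^ 2 - c₂ * ‖y - z‖ ^ 2)
    (hS : ∀ x ∈ C, ∀ y ∈ C, ‖S x - S y‖ ≤ ‖x - y‖) (hlam : ∀ k, 0 ≤ lam k ∧ lam k ≤ b)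
    (hα0 : 0 ≤ α) (hα1 : α ≤ 1) (hx : ∀ k, x k ∈ C)
    (hy : ∀ k, IsProx C (f (x k)) (lam k) (x k) (y k))
    (hz : ∀ k, IsProx C (f (y k)) (lam k) (x k) (z k))
    (ht : ∀ k, t k = (1 - α) • z k + α • S (z k)) {r : H} (hrC : r ∈ C)
    (hrf : ∀ w ∈ C, f r w ≥ 0) (hrS : S r = r) (k : ℕ) :
    (1 - 2 * b * c₁) * ‖x k - y k‖ ^ 2 + (1 - 2 * b * c₂) * ‖y k - z k‖ ^ 2
        ≤ ‖x k - r‖ ^ 2 - ‖z k - r‖ ^ 2 ∧ ‖t k - r‖ ≤ ‖z k - r‖ ∧ ‖z k - r‖ ≤ ‖x k - r‖ := by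
  obtain ⟨hlam0, hlamb⟩ := hlam k
  have hyC := (hy k).1
  have hest := IsProx.extragradient_estimate hlam0 (hf_convex _ (hx k)) (hf_convex _ hyC)
    (hf_lip _ (hx k) _ hyC _ (hz k).1) hrC (hf_pm _ hrC _ hyC (hrf _ hyC)) (hy k) (hz k)
  have hlb := sub_nonneg.2 hlamb
  have hdefect : (1 - 2 * b * c₁) * ‖x k - y k‖ ^ 2 + (1 - 2 * b * c₂) * ‖y k - z k‖ ^ 2
      ≤ ‖x k - r‖ ^ 2 - ‖z k - r‖ ^ 2 := by
    nlinarith [mul_nonneg (mul_nonneg hlb hc₁) (sq_nonneg ‖x k - y k‖),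
      mul_nonneg (mul_nonneg hlb hc₂) (sq_nonneg ‖y k - z k‖)]
  refine ⟨hdefect, ht k ▸ norm_convexComb_sub_le (by simpa only [hrS] using hS _ (hz k).1 _ hrC)
    hα0 hα1, (sq_le_sq₀ (norm_nonneg _) (norm_nonneg _)).1 ?_⟩
  nlinarith [mul_nonneg (sub_nonneg.2 hbc₁) (sq_nonneg ‖x k - y k‖),
    mul_nonneg (sub_nonneg.2 hbc₂) (sq_nonneg ‖y k - z k‖)]

lemma minty {Q : Set H} (hQ : Convex ℝ Q) {g : H → H → ℝ} (hg_refl : ∀ u ∈ Q, g u u = 0)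
    (hg_convex : ∀ u ∈ Q, ConvexOn ℝ Q (g u)) {w : H} (hw : w ∈ Q)
    (hg_hemi : ∀ v ∈ Q, limsup (fun l : ℝ => g (l • v + (1 - l) • w) v) (𝓝[>] 0) ≤ g w v)
    (hdual : ∀ v ∈ Q, g v w ≤ 0) : ∀ v ∈ Q, 0 ≤ g w v := by
  intro v hv
  have hseg : ∀ l ∈ Set.Ioo (0 : ℝ) 1, 0 ≤ g (l • v + (1 - l) • w) v := by
    rintro l ⟨hl0, hl1⟩
    set wl := l • v + (1 - l) • w
    have hwl : wl ∈ Q := hQ hv hw hl0.le (by linarith) (by ring)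
    have hconv : g wl wl ≤ l * g wl v + (1 - l) * g wl w :=
      (hg_convex wl hwl).2 hv hw hl0.le (by linarith) (by ring)
    rw [hg_refl wl hwl] at hconv
    nlinarith [mul_nonpos_of_nonneg_of_nonpos (by linarith : 0 ≤ 1 - l) (hdual wl hwl)]
  refine le_trans ?_ (hg_hemi v hv)
  rw [limsup_eq]
  -- no boundedness is needed: if no eventual upper bound exists, the `sInf` is `sInf ∅ = 0`
  refine Real.sInf_nonneg fun c hc => ?_
  have hIoo : ∀ᶠ l in 𝓝[>] (0 : ℝ), l ∈ Set.Ioo 0 1 := Ioo_mem_nhdsGT one_pos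
  obtain ⟨l, hl, hlc⟩ := (hIoo.and hc).exists
  exact (hseg l hl).trans hlc

lemma le_zero_of_tendsto_resolvent {Q : Set H} {g : H → H → ℝ}
    (hg_mono : ∀ u ∈ Q, ∀ v ∈ Q, g u v + g v u ≤ 0) {v w : H} (hv : v ∈ Q)
    (hlsc : LowerSemicontinuousWithinAt (g v) Q w) {u xs : ℕ → H} {β : ℕ → ℝ}
    (hβ : ∃ c > 0, ∀ᶠ k in atTop, c ≤ β k) (hu : ∀ k, IsResolvent Q g (β k) (xs k) (u k))
    (huw : Tendsto u atTop (𝓝 w)) (hux : Tendsto (fun k => u k - xs k) atTop (𝓝 0)) :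
    g v w ≤ 0 := by
  obtain ⟨c, hc, hcβ⟩ := hβ
  have he : Tendsto (fun k => 1 / c * (‖v - u k‖ * ‖u k - xs k‖)) atTop (𝓝 0) := by
    simpa using ((tendsto_const_nhds.sub huw).norm.mul hux.norm).const_mul (1 / c)
  refine hlsc.le_of_tendsto (fun k => (hu k).1) huw he ?_
  filter_upwards [hcβ] with k hk
  have hres := (hu k).2 v hv
  have hmono := hg_mono (u k) (hu k).1 v hv
  have hinner : 1 / β k * ⟪v - u k, u k - xs k⟫_ℝ ≤ 1 / c * (‖v - u k‖ * ‖u k - xs k‖) :=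
    calc 1 / β k * ⟪v - u k, u k - xs k⟫_ℝ ≤ 1 / β k * (‖v - u k‖ * ‖u k - xs k‖) :=
          mul_le_mul_of_nonneg_left (real_inner_le_norm _ _) (one_div_pos.2 (hc.trans_le hk)).le
      _ ≤ 1 / c * (‖v - u k‖ * ‖u k - xs k‖) :=
          mul_le_mul_of_nonneg_right (one_div_le_one_div_of_le hc hk) (by positivity)
  linarith

lemma nonneg_of_tendsto_prox {C : Set H} {f : H → H → ℝ}
    (hf_cont : ∀ (xs ys : ℕ → H) (x y : H), (∀ k, xs k ∈ C) → (∀ k, ys k ∈ C) →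
      x ∈ C → y ∈ C →
      (∀ w, Tendsto (fun k => ⟪xs k, w⟫_ℝ) atTop (𝓝 ⟪x, w⟫_ℝ)) →
      (∀ w, Tendsto (fun k => ⟪ys k, w⟫_ℝ) atTop (𝓝 ⟪y, w⟫_ℝ)) →
      Tendsto (fun k => f (xs k) (ys k)) atTop (𝓝 (f x y)))
    {a : ℝ} (ha : 0 < a) {lam : ℕ → ℝ} (hlam : ∀ k, a ≤ lam k) {x y : ℕ → H}
    (hx : ∀ k, x k ∈ C) (hf_convex : ∀ k, ConvexOn ℝ C (f (x k)))
    (hy : ∀ k, IsProx C (f (x k)) (lam k) (x k) (y k)) {p : H} (hp : p ∈ C) (hfp : f p p = 0)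
    (hxp : Tendsto x atTop (𝓝 p)) (hyp : Tendsto y atTop (𝓝 p)) : ∀ w ∈ C, 0 ≤ f p w := by
  intro w hw
  have hweak : ∀ {z : ℕ → H}, Tendsto z atTop (𝓝 p) →
      ∀ w', Tendsto (fun k => ⟪z k, w'⟫_ℝ) atTop (𝓝 ⟪p, w'⟫_ℝ) :=
    fun hz w' => hz.inner tendsto_const_nhds
  have hgap : Tendsto (fun k => f (x k) w - f (x k) (y k)) atTop (𝓝 (f p w)) := by
    simpa [hfp] using (hf_cont x (fun _ => w) p w hx (fun _ => hw) hp hw (hweak hxp)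
      fun _ => tendsto_const_nhds).sub (hf_cont x y p p hx (fun k => (hy k).1) hp hp
        (hweak hxp) (hweak hyp))
  have hlow : Tendsto (fun k => -(‖x k - y k‖ * ‖w - y k‖) / a) atTop (𝓝 0) := by
    simpa using (((hxp.sub hyp).norm.mul (tendsto_const_nhds.sub hyp).norm).neg).div_const a
  refine le_of_tendsto_of_tendsto' hlow hgap fun k => ?_
  have hlamk : 0 < lam k := ha.trans_le (hlam k)
  have hvi := (hy k).inner_sub_le (hf_convex k) hlamk.le hw
  have hcs := neg_le_of_abs_le (abs_real_inner_le_norm (x k - y k) (w - y k))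
  calc -(‖x k - y k‖ * ‖w - y k‖) / a ≤ -(‖x k - y k‖ * ‖w - y k‖) / lam k := by
        rw [neg_div, neg_div]
        exact neg_le_neg (div_le_div_of_nonneg_left (by positivity) ha (hlam k))
    _ ≤ f (x k) w - f (x k) (y k) := by rw [div_le_iff₀ hlamk]; linarith

end Hilbert

lemma projected_adjoint_step_estimate
    {H₁ : Type*} [NormedAddCommGroup H₁] [InnerProductSpace ℝ H₁] [CompleteSpace H₁]
    {H₂ : Type*} [NormedAddCommGroup H₂] [InnerProductSpace ℝ H₂] [CompleteSpace H₂]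
    (A : H₁ →L[ℝ] H₂) {C : Set H₁} {μ : ℝ} (hμ : 0 ≤ μ) {t s r : H₁} {v : H₂}
    (hs : ∀ w ∈ C, ⟪(t + μ • (ContinuousLinearMap.adjoint A) (v - A t)) - s, w - s⟫_ℝ ≤ 0)
    (hr : r ∈ C) (hv : ‖v - A r‖ ≤ ‖A t - A r‖) :
    ‖s - r‖ ^ 2 + μ * (1 - μ * ‖A‖ ^ 2) * ‖v - A t‖ ^ 2 ≤ ‖t - r‖ ^ 2 := by
  set δ := v - A t
  set q := t + μ • (ContinuousLinearMap.adjoint A) δ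
  have hproj : ‖s - r‖ ^ 2 ≤ ‖q - r‖ ^ 2 := by
    have := norm_sq_add_norm_sq_le_of_inner_nonpos (hs r hr)
    rw [sub_sub_sub_cancel_right, norm_sub_rev r s] at this
    nlinarith [sq_nonneg ‖q - s‖]
  have hq : ‖q - r‖ ^ 2 = ‖t - r‖ ^ 2 + 2 * μ * ⟪A t - A r, δ⟫_ℝ
      + μ ^ 2 * ‖(ContinuousLinearMap.adjoint A) δ‖ ^ 2 := by
    rw [show q - r = (t - r) + μ • (ContinuousLinearMap.adjoint A) δ by simp only [q]; abel,
      norm_add_sq_real, real_inner_smul_right, ContinuousLinearMap.adjoint_inner_right, map_sub,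
      norm_smul, Real.norm_of_nonneg hμ]
    ring
  have hδ : 2 * ⟪A t - A r, δ⟫_ℝ ≤ -‖δ‖ ^ 2 := by
    have h := norm_add_sq_real δ (A t - A r)
    rw [show δ + (A t - A r) = v - A r by simp only [δ]; abel, real_inner_comm] at h
    nlinarith [sq_le_sq₀ (norm_nonneg _) (norm_nonneg _) |>.2 hv]
  have hadj : ‖(ContinuousLinearMap.adjoint A) δ‖ ≤ ‖A‖ * ‖δ‖ := by
    simpa using (ContinuousLinearMap.adjoint A).le_opNorm δ
  have hadj2 := pow_le_pow_left₀ (norm_nonneg _) hadj 2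
  nlinarith [mul_le_mul_of_nonneg_left hδ hμ, mul_le_mul_of_nonneg_left hadj2 (sq_nonneg μ)]

lemma split_step_fejer
    {H₁ : Type*} [NormedAddCommGroup H₁] [InnerProductSpace ℝ H₁] [CompleteSpace H₁]
    {H₂ : Type*} [NormedAddCommGroup H₂] [InnerProductSpace ℝ H₂] [CompleteSpace H₂]
    (A : H₁ →L[ℝ] H₂) {C : Set H₁} {Q : Set H₂} {g : H₂ → H₂ → ℝ} {T : H₂ → H₂} {μ : ℝ}
    {β : ℕ → ℝ} {t s : ℕ → H₁} {u : ℕ → H₂} (hg_mono : ∀ u ∈ Q, ∀ v ∈ Q, g u v + g v u ≤ 0)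
    (hT : ∀ x ∈ Q, ∀ y ∈ Q, ‖T x - T y‖ ≤ ‖x - y‖) (hμ : 0 ≤ μ) (hμA : μ * ‖A‖ ^ 2 ≤ 1)
    (hβ : ∀ k, 0 < β k)
    (hu : ∀ k, IsResolvent Q g (β k) (A (t k)) (u k))
    (hs : ∀ k, ∀ w ∈ C,
      ⟪(t k + μ • (ContinuousLinearMap.adjoint A) (T (u k) - A (t k))) - s k, w - s k⟫_ℝ ≤ 0)
    {r : H₁} (hrC : r ∈ C) (hrQ : A r ∈ Q) (hrg : ∀ v ∈ Q, g (A r) v ≥ 0)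
    (hrT : T (A r) = A r) (k : ℕ) :
    ‖u k - A r‖ ^ 2 + ‖u k - A (t k)‖ ^ 2 ≤ ‖A (t k) - A r‖ ^ 2 ∧
      ‖T (u k) - A r‖ ≤ ‖u k - A r‖ ∧
      ‖s k - r‖ ^ 2 + μ * (1 - μ * ‖A‖ ^ 2) * ‖T (u k) - A (t k)‖ ^ 2 ≤ ‖t k - r‖ ^ 2 ∧
      ‖s k - r‖ ≤ ‖t k - r‖ := by
  have huQ := (hu k).1
  have hres := (hu k).norm_sq_add_norm_sq_le (hβ k) hrQ
    (by linarith [hg_mono _ huQ _ hrQ, hrg _ huQ])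
  have hTu : ‖T (u k) - A r‖ ≤ ‖u k - A r‖ := by simpa only [hrT] using hT _ huQ _ hrQ
  have hproj := projected_adjoint_step_estimate A hμ (hs k) hrC (hTu.trans
    ((sq_le_sq₀ (norm_nonneg _) (norm_nonneg _)).1 (by nlinarith [sq_nonneg ‖u k - A (t k)‖])))
  refine ⟨hres, hTu, hproj, (sq_le_sq₀ (norm_nonneg _) (norm_nonneg _)).1 ?_⟩
  nlinarith [mul_nonneg (mul_nonneg hμ (sub_nonneg.2 hμA)) (sq_nonneg ‖T (u k) - A (t k)‖)]

end SplitEquilibrium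

open SplitEquilibrium

/-- `Cs k` is the paper's `C_{k+1}` (so `Cs 0 = C₁ = C`), and `x 0` is `x¹`. -/
theorem strong_convergence_SEPNM_general
    {H₁ : Type*} [NormedAddCommGroup H₁] [InnerProductSpace ℝ H₁] [CompleteSpace H₁]
    {H₂ : Type*} [NormedAddCommGroup H₂] [InnerProductSpace ℝ H₂] [CompleteSpace H₂]
    (C : Set H₁) (hCcl : IsClosed C) (hCcv : Convex ℝ C)
    (Q : Set H₂) (hQcl : IsClosed Q) (hQcv : Convex ℝ Q)
    (S : H₁ → H₁)
    (hSne : ∀ x ∈ C, ∀ y ∈ C, ‖S x - S y‖ ≤ ‖x - y‖)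
    (T : H₂ → H₂)
    (hTne : ∀ x ∈ Q, ∀ y ∈ Q, ‖T x - T y‖ ≤ ‖x - y‖)
    (A : H₁ →L[ℝ] H₂)
    (g : H₂ → H₂ → ℝ)
    (hgA1 : ∀ u ∈ Q, g u u = 0)
    (hgA2 : ∀ u ∈ Q, ∀ v ∈ Q, g u v + g v u ≤ 0)
    (hgA3 : ∀ u ∈ Q, ∀ v ∈ Q, ∀ w ∈ Q,
      limsup (fun lam : ℝ => g (lam • w + (1 - lam) • u) v) (nhdsWithin 0 (Set.Ioi 0)) ≤ g u v)
    (hgA4 : ∀ u ∈ Q, ConvexOn ℝ Q (g u) ∧ LowerSemicontinuousOn (g u) Q)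
    (f : H₁ → H₁ → ℝ) (c₁ c₂ : ℝ) (hc₁ : 0 < c₁) (hc₂ : 0 < c₂)
    (hfB1 : ∀ x ∈ C, f x x = 0)
    (hfB2 : ∀ x ∈ C, ∀ y ∈ C, 0 ≤ f x y → f y x ≤ 0)
    (hfB3 : ∀ (xs ys : ℕ → H₁) (x y : H₁), (∀ k, xs k ∈ C) → (∀ k, ys k ∈ C) →
      x ∈ C → y ∈ C →
      (∀ w : H₁, Tendsto (fun k => (inner ℝ (xs k) w : ℝ)) atTop (nhds (inner ℝ x w))) →
      (∀ w : H₁, Tendsto (fun k => (inner ℝ (ys k) w : ℝ)) atTop (nhds (inner ℝ y w))) →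
      Tendsto (fun k => f (xs k) (ys k)) atTop (nhds (f x y)))
    (hfB4 : ∀ x ∈ C, ConvexOn ℝ C (f x))
    (hfB5 : ∀ x ∈ C, ∀ y ∈ C, ∀ z ∈ C,
      f x y + f y z ≥ f x z - c₁ * ‖x - y‖ ^ 2 - c₂ * ‖y - z‖ ^ 2)
    (a b : ℝ) (ha : 0 < a) (hb : b < min (1 / (2 * c₁)) (1 / (2 * c₂)))
    (lam : ℕ → ℝ) (hlam : ∀ k, lam k ∈ Set.Icc a b)
    (α : ℝ) (hα0 : 0 < α) (hα1 : α < 1)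
    (μ : ℝ) (hμ0 : 0 < μ) (hμ : μ * ‖A‖ ^ 2 < 1)
    (αk : ℕ → ℝ) (hαk : ∀ k, 0 < αk k)
    (hαkinf : ∃ c > 0, ∀ᶠ k in atTop, c ≤ αk k)
    (x y z t : ℕ → H₁) (u : ℕ → H₂) (s : ℕ → H₁) (Cs : ℕ → Set H₁)
    (hCs0 : Cs 0 = C)
    (hx0 : x 0 ∈ C)
    (hy : ∀ k, y k ∈ C ∧ ∀ w ∈ C,
      lam k * f (x k) (y k) + (1 / 2) * ‖y k - x k‖ ^ 2 ≤
        lam k * f (x k) w + (1 / 2) * ‖w - x k‖ ^ 2)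
    (hz : ∀ k, z k ∈ C ∧ ∀ w ∈ C,
      lam k * f (y k) (z k) + (1 / 2) * ‖z k - x k‖ ^ 2 ≤
        lam k * f (y k) w + (1 / 2) * ‖w - x k‖ ^ 2)
    (ht : ∀ k, t k = (1 - α) • z k + α • S (z k))
    (hu : ∀ k, u k ∈ Q ∧ ∀ v ∈ Q,
      g (u k) v + (1 / αk k) * (inner ℝ (v - u k) (u k - A (t k)) : ℝ) ≥ 0)
    (hs : ∀ k, s k ∈ C ∧ ∀ w ∈ C,
      (inner ℝ ((t k + μ • (ContinuousLinearMap.adjoint A) (T (u k) - A (t k))) - s k)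
        (w - s k) : ℝ) ≤ 0)
    (hCsrec : ∀ k, Cs (k + 1) =
      {r ∈ Cs k | ‖s k - r‖ ≤ ‖t k - r‖ ∧ ‖t k - r‖ ≤ ‖x k - r‖})
    (hxk : ∀ k, x (k + 1) ∈ Cs (k + 1) ∧ ∀ w ∈ Cs (k + 1),
      (inner ℝ (x 0 - x (k + 1)) (w - x (k + 1)) : ℝ) ≤ 0)
    (Ω : Set H₁)
    (hΩ : Ω = {xs : H₁ | xs ∈ C ∧ (∀ w ∈ C, f xs w ≥ 0) ∧ S xs = xs ∧
      A xs ∈ Q ∧ (∀ v ∈ Q, g (A xs) v ≥ 0) ∧ T (A xs) = A xs})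
    (hΩne : Ω.Nonempty) :
    (∀ k, (Cs k).Nonempty ∧ IsClosed (Cs k) ∧ Convex ℝ (Cs k) ∧ Ω ⊆ Cs k) ∧
    ∃ p ∈ Ω,
      Tendsto x atTop (nhds p) ∧
      Tendsto z atTop (nhds p) ∧
      Tendsto u atTop (nhds (A p)) ∧
      A p ∈ Q ∧ (∀ v ∈ Q, g (A p) v ≥ 0) ∧ T (A p) = A p := by
  obtain ⟨p₀, hp₀⟩ := hΩne
  have hκ : ∀ {c : ℝ}, 0 < c → b < 1 / (2 * c) → 0 < 1 - 2 * b * c := fun hc h => by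
    have := (lt_div_iff₀ (by positivity)).1 h; linarith
  have hκ₁ := hκ hc₁ (hb.trans_le (min_le_left _ _))
  have hκ₂ := hκ hc₂ (hb.trans_le (min_le_right _ _))
  have hκ₃ : 0 < μ * (1 - μ * ‖A‖ ^ 2) := mul_pos hμ0 (sub_pos.2 hμ)
  have hxC : ∀ k, x k ∈ C := by
    rintro (_ | k); exacts [hx0, hCs0 ▸ antitone_of_shrinking hCsrec (Nat.zero_le _) (hxk k).1]
  have hextra : ∀ r ∈ Ω, ∀ k, _ := fun r hr => by
    obtain ⟨hrC, hrf, hrS, -⟩ := hΩ ▸ hr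
    exact extragradient_mann_fejer hc₁.le hc₂.le (by linarith) (by linarith) hfB2 hfB4 hfB5 hSne
      (fun k => ⟨(ha.trans_le (hlam k).1).le, (hlam k).2⟩) hα0.le hα1.le hxC hy hz ht hrC hrf hrS
  have hsplit : ∀ r ∈ Ω, ∀ k, _ := fun r hr => by
    obtain ⟨hrC, -, -, hrQ, hrg, hrT⟩ := hΩ ▸ hr
    exact split_step_fejer A hgA2 hTne hμ0.le hμ.le hαk hu (fun k => (hs k).2) hrC hrQ hrg hrT
  obtain ⟨hCs, p, hpC, hxp, htp, hsp⟩ := shrinking_projection_method hCcl hCcv hCs0 hCsrec hx0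
    hxk (fun r hr => (hΩ ▸ hr).1) ⟨p₀, hp₀⟩
    fun r hr k => ⟨(hsplit r hr k).2.2.2, (hextra r hr k).2.1.trans (hextra r hr k).2.2⟩
  obtain ⟨hyp, hzp⟩ := tendsto_extragradient_of_fejer hκ₁ hκ₂ (hextra p₀ hp₀) hxp htp
  have hAtp : Tendsto (fun k => A (t k)) atTop (𝓝 (A p)) := (A.continuous.tendsto p).comp htp
  obtain ⟨hTuAt, huAt⟩ := tendsto_split_residuals hκ₃ (fun k => (hsplit p₀ hp₀ k).1)
    (fun k => (hsplit p₀ hp₀ k).2.1) (fun k => (hsplit p₀ hp₀ k).2.2.1) htp hsp hAtp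
  have hup : Tendsto u atTop (𝓝 (A p)) := by simpa using hAtp.add huAt
  have huQ : ∀ k, u k ∈ Q := fun k => (hu k).1
  have hApQ : A p ∈ Q := hQcl.mem_of_tendsto hup (.of_forall huQ)
  have hTAp : T (A p) = A p :=
    eq_of_tendsto_of_nonexpansive hTne huQ hApQ hup (by simpa using hTuAt.add hAtp)
  have hgAp : ∀ v ∈ Q, g (A p) v ≥ 0 :=
    minty hQcv hgA1 (fun u hu => (hgA4 u hu).1) hApQ (fun v hv => hgA3 _ hApQ _ hv _ hv)
      fun v hv => le_zero_of_tendsto_resolvent hgA2 hv ((hgA4 v hv).2 _ hApQ) hαkinf hu hup huAt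
  have hfp := nonneg_of_tendsto_prox hfB3 ha (fun k => (hlam k).1) hxC
    (fun k => hfB4 _ (hxC k)) hy hpC (hfB1 p hpC) hxp hyp
  have hSp := eq_of_tendsto_mann hSne hα0.ne' (fun k => (hz k).1) hpC ht hzp htp
  refine ⟨hCs, p, ?_, hxp, hzp, hup, hApQ, hgAp, hTAp⟩
  rw [hΩ]
  exact ⟨hpC, hfp, hSp, hApQ, hgAp, hTAp⟩

/-- Strong convergence theorem for the hybrid extragradient algorithm for the split
equilibrium and nonexpansive mapping problem (SEPNM). Here `Cs k` plays the role of `C_{k+1}`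
in the paper (so `Cs 0 = C₁ = C`), and `x 0 = x¹`. -/
theorem strong_convergence_SEPNM
    {H₁ : Type*} [NormedAddCommGroup H₁] [InnerProductSpace ℝ H₁] [CompleteSpace H₁]
    {H₂ : Type*} [NormedAddCommGroup H₂] [InnerProductSpace ℝ H₂] [CompleteSpace H₂]
    (C : Set H₁) (hCne : C.Nonempty) (hCcl : IsClosed C) (hCcv : Convex ℝ C)
    (Q : Set H₂) (hQne : Q.Nonempty) (hQcl : IsClosed Q) (hQcv : Convex ℝ Q)
    (S : H₁ → H₁) (hS : Set.MapsTo S C C)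
    (hSne : ∀ x ∈ C, ∀ y ∈ C, ‖S x - S y‖ ≤ ‖x - y‖)
    (T : H₂ → H₂) (hT : Set.MapsTo T Q Q)
    (hTne : ∀ x ∈ Q, ∀ y ∈ Q, ‖T x - T y‖ ≤ ‖x - y‖)
    (A : H₁ →L[ℝ] H₂)
    (g : H₂ → H₂ → ℝ)
    (hgA1 : ∀ u ∈ Q, g u u = 0)
    (hgA2 : ∀ u ∈ Q, ∀ v ∈ Q, g u v + g v u ≤ 0)
    (hgA3 : ∀ u ∈ Q, ∀ v ∈ Q, ∀ w ∈ Q,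
      limsup (fun lam : ℝ => g (lam • w + (1 - lam) • u) v) (nhdsWithin 0 (Set.Ioi 0)) ≤ g u v)
    (hgA4 : ∀ u ∈ Q, ConvexOn ℝ Q (g u) ∧ LowerSemicontinuousOn (g u) Q)
    (f : H₁ → H₁ → ℝ) (c₁ c₂ : ℝ) (hc₁ : 0 < c₁) (hc₂ : 0 < c₂)
    (hfB1 : ∀ x ∈ C, f x x = 0)
    (hfB2 : ∀ x ∈ C, ∀ y ∈ C, 0 ≤ f x y → f y x ≤ 0)
    (hfB3 : ∀ (xs ys : ℕ → H₁) (x y : H₁), (∀ k, xs k ∈ C) → (∀ k, ys k ∈ C) →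
      x ∈ C → y ∈ C →
      (∀ w : H₁, Tendsto (fun k => (inner ℝ (xs k) w : ℝ)) atTop (nhds (inner ℝ x w))) →
      (∀ w : H₁, Tendsto (fun k => (inner ℝ (ys k) w : ℝ)) atTop (nhds (inner ℝ y w))) →
      Tendsto (fun k => f (xs k) (ys k)) atTop (nhds (f x y)))
    (hfB4 : ∀ x ∈ C, ConvexOn ℝ C (f x))
    (hfB5 : ∀ x ∈ C, ∀ y ∈ C, ∀ z ∈ C,
      f x y + f y z ≥ f x z - c₁ * ‖x - y‖ ^ 2 - c₂ * ‖y - z‖ ^ 2)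
    (a b : ℝ) (ha : 0 < a) (hab : a ≤ b) (hb : b < min (1 / (2 * c₁)) (1 / (2 * c₂)))
    (lam : ℕ → ℝ) (hlam : ∀ k, lam k ∈ Set.Icc a b)
    (α : ℝ) (hα0 : 0 < α) (hα1 : α < 1)
    (μ : ℝ) (hμ0 : 0 < μ) (hμ : μ * ‖A‖ ^ 2 < 1)
    (αk : ℕ → ℝ) (hαk : ∀ k, 0 < αk k)
    (hαkinf : ∃ c > 0, ∀ᶠ k in atTop, c ≤ αk k)
    (x y z t : ℕ → H₁) (u : ℕ → H₂) (s : ℕ → H₁) (Cs : ℕ → Set H₁)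
    (hCs0 : Cs 0 = C)
    (hx0 : x 0 ∈ C)
    (hy : ∀ k, y k ∈ C ∧ ∀ w ∈ C,
      lam k * f (x k) (y k) + (1 / 2) * ‖y k - x k‖ ^ 2 ≤
        lam k * f (x k) w + (1 / 2) * ‖w - x k‖ ^ 2)
    (hz : ∀ k, z k ∈ C ∧ ∀ w ∈ C,
      lam k * f (y k) (z k) + (1 / 2) * ‖z k - x k‖ ^ 2 ≤
        lam k * f (y k) w + (1 / 2) * ‖w - x k‖ ^ 2)
    (ht : ∀ k, t k = (1 - α) • z k + α • S (z k))
    (hu : ∀ k, u k ∈ Q ∧ ∀ v ∈ Q,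
      g (u k) v + (1 / αk k) * (inner ℝ (v - u k) (u k - A (t k)) : ℝ) ≥ 0)
    (hs : ∀ k, s k ∈ C ∧ ∀ w ∈ C,
      (inner ℝ ((t k + μ • (ContinuousLinearMap.adjoint A) (T (u k) - A (t k))) - s k)
        (w - s k) : ℝ) ≤ 0)
    (hCsrec : ∀ k, Cs (k + 1) =
      {r ∈ Cs k | ‖s k - r‖ ≤ ‖t k - r‖ ∧ ‖t k - r‖ ≤ ‖x k - r‖})
    (hxk : ∀ k, x (k + 1) ∈ Cs (k + 1) ∧ ∀ w ∈ Cs (k + 1),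
      (inner ℝ (x 0 - x (k + 1)) (w - x (k + 1)) : ℝ) ≤ 0)
    (Ω : Set H₁)
    (hΩ : Ω = {xs : H₁ | xs ∈ C ∧ (∀ w ∈ C, f xs w ≥ 0) ∧ S xs = xs ∧
      A xs ∈ Q ∧ (∀ v ∈ Q, g (A xs) v ≥ 0) ∧ T (A xs) = A xs})
    (hΩne : Ω.Nonempty) :
    (∀ k, (Cs k).Nonempty ∧ IsClosed (Cs k) ∧ Convex ℝ (Cs k) ∧ Ω ⊆ Cs k) ∧
    ∃ p ∈ Ω,
      Tendsto x atTop (nhds p) ∧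
      Tendsto z atTop (nhds p) ∧
      Tendsto u atTop (nhds (A p)) ∧
      A p ∈ Q ∧ (∀ v ∈ Q, g (A p) v ≥ 0) ∧ T (A p) = A p :=
  strong_convergence_SEPNM_general C hCcl hCcv Q hQcl hQcv S hSne T hTne A g hgA1 hgA2 hgA3 hgA4 f
    c₁ c₂ hc₁ hc₂ hfB1 hfB2 hfB3 hfB4 hfB5 a b ha hb lam hlam α hα0 hα1 μ hμ0 hμ αk hαk hαkinf x y z
    t u s Cs hCs0 hx0 hy hz ht hu hs hCsrec hxk Ω hΩ hΩne
end
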